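/- arXiv:2308.05053 — 8 statements merged into one kernel-verified Lean document; each statement's English description precedes it below -/
import Mathlib

section
/- Fix n ∈ ℕ and let W ⊆ ℂⁿ be a complex vector subspace with dim_ℂ W = r < n. Then there exist n − r complex hyperplanes H₁, …, H_{n−r} ⊆ ℂⁿ (complex linear subspaces of dimension n − 1) such that W = H₁ ∩ ⋯ ∩ H_{n−r} and W ∩ ℤⁿ = Hᵢ ∩ ℤⁿ for every i ∈ {1, …, n−r}. -/
/-- Lattice points of a complex subspace of `ℂⁿ`: integer vectors whose image in `ℂⁿ`
lies in the subspace. -/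
def latticePoints {n : ℕ} (U : Submodule ℂ (Fin n → ℂ)) : Set (Fin n → ℤ) :=
  {m | (fun i => (m i : ℂ)) ∈ U}

open Module Set

/-- A countable family of proper subspaces of `ℂᵏ` cannot cover the space. -/
lemma aux_exists_notMem_submodules {k : ℕ} {ι : Type*} [Countable ι]
    (p : ι → Submodule ℂ (Fin k → ℂ)) (hp : ∀ i, p i ≠ ⊤) :
    ∃ v : Fin k → ℂ, ∀ i, v ∉ p i := by
  by_contra h
  push_neg at h
  have hU : ⋃ i, ((p i : Set (Fin k → ℂ))) = Set.univ := by
    ext v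
    simp only [Set.mem_iUnion, Set.mem_univ, iff_true, SetLike.mem_coe]
    exact h v
  obtain ⟨i, hi⟩ := nonempty_interior_of_iUnion_of_closed
    (fun i => (p i).closed_of_finiteDimensional) hU
  exact hp i ((p i).eq_top_of_nonempty_interior' hi)

/-- An `r`-dimensional complex subspace `W ⊆ ℂⁿ` with `r < n` is the intersection of
`n - r` complex hyperplanes, each having the same lattice points as `W`. -/
theorem exists_hyperplanes_cutting_subspace (n r : ℕ) (hrn : r < n)
    (W : Submodule ℂ (Fin n → ℂ)) (hr : Module.finrank ℂ W = r) :
    ∃ H : Fin (n - r) → Submodule ℂ (Fin n → ℂ),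
      (∀ i, Module.finrank ℂ (H i) = n - 1) ∧
      W = ⨅ i, H i ∧
      ∀ i, latticePoints (H i) = latticePoints W := by
  classical
  set k := n - r with hk
  have hQ : finrank ℂ ((Fin n → ℂ) ⧸ W) = k := by
    have h1 := W.finrank_quotient_add_finrank
    have h2 : finrank ℂ (Fin n → ℂ) = n := by
      rw [Module.finrank_pi]; simp
    omega
  let e : ((Fin n → ℂ) ⧸ W) ≃ₗ[ℂ] (Fin k → ℂ) :=
    LinearEquiv.ofFinrankEq _ _ (by rw [hQ, Module.finrank_pi]; simp)
  let π := W.mkQ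
  -- the countable set of (images of) lattice points outside `W`
  let L := {m : Fin n → ℤ // π (fun i => (m i : ℂ)) ≠ 0}
  let s : L → (Fin k → ℂ) := fun m => e (π (fun i => ((m.1 i : ℤ) : ℂ)))
  have hs : ∀ m : L, s m ≠ 0 := by
    intro m hm
    exact m.2 (e.map_eq_zero_iff.1 hm)
  let f : L → ((Fin k → ℂ) →ₗ[ℂ] ℂ) := fun m => ∑ j, s m j • LinearMap.proj j
  have hf : ∀ m (w : Fin k → ℂ), f m w = ∑ j, s m j * w j := by
    intro m w
    simp [f, LinearMap.sum_apply, LinearMap.smul_apply, LinearMap.proj_apply, smul_eq_mul]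
  have hker : ∀ m : L, LinearMap.ker (f m) ≠ ⊤ := by
    intro m hm
    obtain ⟨j, hj⟩ := Function.ne_iff.1 (hs m)
    rw [LinearMap.ker_eq_top] at hm
    have : f m (Pi.single j 1) = s m j := by
      rw [hf]
      simp [Pi.single_apply, mul_ite, Finset.sum_ite_eq']
    rw [hm] at this
    exact hj (by simpa using this.symm)
  obtain ⟨v, hv⟩ := aux_exists_notMem_submodules (fun m => LinearMap.ker (f m)) hker
  let d : L → ℂ := fun m => ∑ j, s m j * v j
  have hd : ∀ m, d m ≠ 0 := by
    intro m hm
    exact hv m (by rw [LinearMap.mem_ker, hf]; exact hm)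
  -- choose `t` avoiding a countable bad set
  let g : (L × Fin k) ⊕ (Unit ⊕ Fin k) → ℂ := fun x =>
    match x with
    | Sum.inl (m, i) => -(s m i) / d m
    | Sum.inr (Sum.inl _) => if (∑ j, v j) = 0 then 0 else -1 / ∑ j, v j
    | Sum.inr (Sum.inr i) => if v i = 0 then 0 else -1 / v i
  obtain ⟨t, ht⟩ : ∃ t : ℂ, t ∉ Set.range g := by
    rw [← Set.ne_univ_iff_exists_notMem]
    intro hgu
    exact not_countable_complex (hgu ▸ Set.countable_range g)
  have ha : ∀ (m : L) (i : Fin k), s m i + t * d m ≠ 0 := by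
    intro m i h
    apply ht ⟨Sum.inl (m, i), ?_⟩
    show -(s m i) / d m = t
    rw [div_eq_iff (hd m)]
    linear_combination -h
  have hb : 1 + t * (∑ j, v j) ≠ 0 := by
    intro h
    have hSig : (∑ j, v j) ≠ 0 := by
      intro h0; rw [h0, mul_zero] at h; simpa using h
    apply ht ⟨Sum.inr (Sum.inl ()), ?_⟩
    show (if (∑ j, v j) = 0 then 0 else -1 / ∑ j, v j) = t
    rw [if_neg hSig, div_eq_iff hSig]
    linear_combination -h
  have hc : ∀ i, 1 + t * v i ≠ 0 := by
    intro i h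
    have hvi : v i ≠ 0 := by
      intro h0; rw [h0, mul_zero] at h; simpa using h
    apply ht ⟨Sum.inr (Sum.inr i), ?_⟩
    show (if v i = 0 then 0 else -1 / v i) = t
    rw [if_neg hvi, div_eq_iff hvi]
    linear_combination -h
  -- the hyperplanes
  let u : Fin k → (Fin k → ℂ) := fun i j => (if j = i then 1 else 0) + t * v j
  let φ : Fin k → ((Fin n → ℂ) →ₗ[ℂ] ℂ) := fun i =>
    (∑ j, u i j • LinearMap.proj j) ∘ₗ (e.toLinearMap ∘ₗ π)
  have hφ : ∀ i x, φ i x = (e (π x)) i + t * ∑ j, (e (π x)) j * v j := by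
    intro i x
    show (∑ j, u i j • LinearMap.proj j : (Fin k → ℂ) →ₗ[ℂ] ℂ) (e (π x)) = _
    simp only [LinearMap.sum_apply, LinearMap.smul_apply, LinearMap.proj_apply, smul_eq_mul, u]
    rw [Finset.sum_congr rfl
      (fun j _ => by ring_nf :
        ∀ j ∈ Finset.univ, ((if j = i then 1 else 0) + t * v j) * (e (π x)) j
          = (if j = i then 1 else 0) * (e (π x)) j + t * ((e (π x)) j * v j)),
      Finset.sum_add_distrib, ← Finset.mul_sum]
    congr 1
    simp [ite_mul, Finset.sum_ite_eq']
  have hWle : ∀ (i : Fin k) (x : Fin n → ℂ), x ∈ W → φ i x = 0 := by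
    intro i x hx
    have hπx : π x = 0 := (Submodule.Quotient.mk_eq_zero W).2 hx
    rw [hφ, hπx]
    simp
  refine ⟨fun i => LinearMap.ker (φ i), ?_, ?_, ?_⟩
  · -- each is a hyperplane
    intro i
    obtain ⟨q, hq⟩ := e.surjective (Pi.single i 1)
    obtain ⟨x, hx⟩ := W.mkQ_surjective q
    have hπx : π x = q := hx
    have hφx : φ i x = 1 + t * v i := by
      rw [hφ, hπx, hq]
      simp [Pi.single_apply, ite_mul, Finset.sum_ite_eq']
    have hsurj : Function.Surjective (φ i) := by
      intro c
      refine ⟨(c / (1 + t * v i)) • x, ?_⟩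
      rw [map_smul, hφx, smul_eq_mul, div_mul_cancel₀ _ (hc i)]
    have hrange : LinearMap.range (φ i) = ⊤ := LinearMap.range_eq_top.2 hsurj
    have h1 := LinearMap.finrank_range_add_finrank_ker (φ i)
    rw [hrange, finrank_top, Module.finrank_self] at h1
    have h2 : finrank ℂ (Fin n → ℂ) = n := by rw [Module.finrank_pi]; simp
    rw [h2] at h1
    show finrank ℂ (LinearMap.ker (φ i)) = n - 1
    omega
  · -- W is the intersection
    refine le_antisymm (le_iInf fun i => fun x hx => LinearMap.mem_ker.2 (hWle i x hx)) ?_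
    intro x hx
    rw [Submodule.mem_iInf] at hx
    have hx' : ∀ i : Fin k, (e (π x)) i + t * ∑ j, (e (π x)) j * v j = 0 := by
      intro i
      rw [← hφ]
      exact LinearMap.mem_ker.1 (hx i)
    set y : Fin k → ℂ := e (π x) with hy
    set D : ℂ := ∑ j, y j * v j with hD
    have hyi : ∀ i, y i = -(t * D) := by
      intro i
      linear_combination hx' i
    have hDD : D = -(t * D) * ∑ j, v j := by
      rw [hD]
      rw [Finset.mul_sum]
      exact Finset.sum_congr rfl fun j _ => by rw [hyi j]
    have hD0 : D = 0 := by
      have : D * (1 + t * ∑ j, v j) = 0 := by linear_combination hDD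
      rcases mul_eq_zero.1 this with h | h
      · exact h
      · exact absurd h hb
    have hy0 : y = 0 := by
      funext i
      simp [hyi i, hD0]
    have hπ0 : π x = 0 := e.map_eq_zero_iff.1 hy0
    exact (Submodule.Quotient.mk_eq_zero W).1 hπ0
  · -- same lattice points
    intro i
    ext m
    constructor
    · intro hm
      by_contra hmW
      have hπm : π (fun i => ((m i : ℤ) : ℂ)) ≠ 0 := by
        intro h0
        exact hmW ((Submodule.Quotient.mk_eq_zero W).1 h0)
      have h0 : φ i (fun i => ((m i : ℤ) : ℂ)) = 0 := LinearMap.mem_ker.1 hm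
      rw [hφ] at h0
      exact ha ⟨m, hπm⟩ i h0
    · intro hm
      exact LinearMap.mem_ker.2 (hWle i _ hm)
end

section
/- Fix n ∈ ℕ and let W ⊊ V ⊆ ℂⁿ be complex vector subspaces with W a proper subspace of ℂⁿ and W strictly contained in V. Then there exists a complex hyperplane H ⊆ ℂⁿ (a complex linear subspace of dimension n − 1) such that W ⊆ H, V ⊄ H, and H ∩ ℤⁿ = W ∩ ℤⁿ. -/
set_option maxHeartbeats 1000000
set_option synthInstance.maxHeartbeats 1000000

open Module Set

/-- The space of continuous linear functionals vanishing on `W`. -/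
noncomputable def annT {n : ℕ} (W : Submodule ℂ (Fin n → ℂ)) :
    Submodule ℂ ((Fin n → ℂ) →L[ℂ] ℂ) where
  carrier := {f | ∀ w ∈ W, f w = 0}
  add_mem' := by
    intro f g hf hg w hw
    simp [hf w hw, hg w hw]
  zero_mem' := by intro w hw; simp
  smul_mem' := by
    intro c f hf w hw
    simp [hf w hw]

/-- Evaluation at a point, as a linear map on `annT W`. -/
noncomputable def evalT {n : ℕ} (W : Submodule ℂ (Fin n → ℂ)) (x : Fin n → ℂ) :
    ↥(annT W) →ₗ[ℂ] ℂ :=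
  ((ContinuousLinearMap.apply ℂ ℂ x).toLinearMap).comp (annT W).subtype

lemma evalT_apply {n : ℕ} (W : Submodule ℂ (Fin n → ℂ)) (x : Fin n → ℂ)
    (f : ↥(annT W)) : evalT W x f = (f : (Fin n → ℂ) →L[ℂ] ℂ) x := rfl

lemma evalT_continuous {n : ℕ} (W : Submodule ℂ (Fin n → ℂ)) (x : Fin n → ℂ) :
    Continuous (evalT W x) :=
  (ContinuousLinearMap.apply ℂ ℂ x).continuous.comp continuous_subtype_val

/-- Kernel of evaluation. -/
noncomputable def kerT {n : ℕ} (W : Submodule ℂ (Fin n → ℂ)) (x : Fin n → ℂ) :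
    Submodule ℂ ↥(annT W) := LinearMap.ker (evalT W x)

lemma mem_kerT {n : ℕ} {W : Submodule ℂ (Fin n → ℂ)} {x : Fin n → ℂ}
    {f : ↥(annT W)} : f ∈ kerT W x ↔ evalT W x f = 0 := LinearMap.mem_ker

/-- If `W ⊊ V ⊆ ℂⁿ` are complex subspaces with `W` proper in `ℂⁿ`, then there is a complex
hyperplane `H` with `W ⊆ H`, `V ⊄ H`, and `H ∩ ℤⁿ = W ∩ ℤⁿ`. -/
theorem exists_hyperplane_step (n : ℕ) (W V : Submodule ℂ (Fin n → ℂ))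
    (hW : W ≠ ⊤) (hWV : W < V) :
    ∃ H : Submodule ℂ (Fin n → ℂ),
      Module.finrank ℂ H = n - 1 ∧ W ≤ H ∧ ¬ V ≤ H ∧
      latticePoints H = latticePoints W := by
  classical
  -- for every x ∉ W there is g ∈ annT W with g x ≠ 0
  have key : ∀ x : Fin n → ℂ, x ∉ W →
      ∃ g : (Fin n → ℂ) →L[ℂ] ℂ, g ∈ annT W ∧ g x ≠ 0 := by
    intro x hx
    obtain ⟨f, hfx, hfW⟩ := W.exists_dual_map_eq_bot_of_notMem hx inferInstance
    refine ⟨LinearMap.toContinuousLinearMap f, ?_, by simpa using hfx⟩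
    intro w hw
    have : f w ∈ W.map f := Submodule.mem_map_of_mem hw
    rw [hfW] at this
    simpa using this
  obtain ⟨v, hvV, hvW⟩ := SetLike.exists_of_lt hWV
  -- the countable set of points to avoid
  set C : Set (Fin n → ℂ) :=
    insert v ((fun m : Fin n → ℤ => fun i => (m i : ℂ)) ''
      {m | (fun i => (m i : ℂ)) ∉ W}) with hC
  have hCc : C.Countable := (Set.Countable.image (Set.to_countable _) _).insert v
  have hCW : ∀ x ∈ C, x ∉ W := by
    rintro x (rfl | ⟨m, hm, rfl⟩)
    · exact hvW
    · exact hm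
  -- each bad set is a closed proper subspace of `annT W`; complement open dense
  have hres : (⋂ x ∈ C, {f : ↥(annT W) | evalT W x f ≠ 0}) ∈ residual ↥(annT W) := by
    refine (countable_bInter_mem hCc).2 fun x hx => ?_
    have hclosed : IsClosed {f : ↥(annT W) | evalT W x f = 0} :=
      isClosed_eq (evalT_continuous W x) continuous_const
    have hBne : kerT W x ≠ ⊤ := by
      obtain ⟨g, hgT, hgx⟩ := key x (hCW x hx)
      intro h
      have : (⟨g, hgT⟩ : ↥(annT W)) ∈ kerT W x := h ▸ Submodule.mem_top
      exact hgx (by simpa [evalT_apply] using mem_kerT.1 this)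
    have hint : interior {f : ↥(annT W) | evalT W x f = 0} = ∅ := by
      by_contra h
      have hker2 : kerT W x = ⊤ := by
        haveI : ContinuousAdd ↥(annT W) :=
          ⟨Continuous.subtype_mk ((continuous_subtype_val.comp continuous_fst).add
            (continuous_subtype_val.comp continuous_snd)) _⟩
        haveI hNB : Filter.NeBot (nhdsWithin (0:ℂ) {c : ℂ | IsUnit c}) :=
          NormedField.nhdsWithin_isUnit_neBot
        refine @Submodule.eq_top_of_nonempty_interior' ℂ ↥(annT W) _ _ _ _ _ _ _ hNB
          (kerT W x) ?_
        rw [show ((kerT W x : Submodule ℂ ↥(annT W)) : Set ↥(annT W)) =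
            {f : ↥(annT W) | evalT W x f = 0} from Set.ext fun f => mem_kerT]
        exact nonempty_iff_ne_empty.2 h
      exact hBne hker2
    have hcompl : {f : ↥(annT W) | evalT W x f ≠ 0} =
        {f : ↥(annT W) | evalT W x f = 0}ᶜ := rfl
    rw [hcompl]
    refine residual_of_dense_open hclosed.isOpen_compl ?_
    rw [← interior_eq_empty_iff_dense_compl]
    exact hint
  obtain ⟨f, hf⟩ := (dense_of_mem_residual hres).nonempty
  simp only [Set.mem_iInter, Set.mem_setOf_eq, evalT_apply] at hf
  have hfW : ∀ w ∈ W, (f : (Fin n → ℂ) →L[ℂ] ℂ) w = 0 := f.2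
  have hfv : (f : (Fin n → ℂ) →L[ℂ] ℂ) v ≠ 0 := hf v (Set.mem_insert _ _)
  refine ⟨LinearMap.ker ((f : (Fin n → ℂ) →L[ℂ] ℂ) : (Fin n → ℂ) →ₗ[ℂ] ℂ), ?_, ?_, ?_, ?_⟩
  · set φ : (Fin n → ℂ) →ₗ[ℂ] ℂ := ((f : (Fin n → ℂ) →L[ℂ] ℂ) : (Fin n → ℂ) →ₗ[ℂ] ℂ)
    have hrank := LinearMap.finrank_range_add_finrank_ker φ
    have hne : φ ≠ 0 := by
      intro h; exact hfv (by simpa [φ] using LinearMap.congr_fun h v)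
    have hsurj : Function.Surjective φ := LinearMap.surjective_of_ne_zero hne
    rw [LinearMap.range_eq_top.2 hsurj, finrank_top, Module.finrank_self] at hrank
    have hE : finrank ℂ (Fin n → ℂ) = n := by simp
    omega
  · exact fun w hw => hfW w hw
  · intro h
    exact hfv (h hvV)
  · ext m
    simp only [latticePoints, Set.mem_setOf_eq, LinearMap.mem_ker]
    constructor
    · intro hm
      by_contra hmW
      exact hf _ (Set.mem_insert_of_mem _ ⟨m, hmW, rfl⟩) hm
    · intro hm
      exact hfW _ hm
end

section
/- Fix n ∈ ℕ. Let σ be a rational polyhedral cone in ℝⁿ and W ⊆ ℂⁿ a complex vector subspace. Assume that every face τ of σ satisfies the implication [Relint(τ) ∩ W ∩ ℤⁿ ≠ ∅ ⟹ τ ⊆ W]. Then every rational polyhedral cone σ' with σ' ⊆ σ also satisfies the implication [Relint(σ') ∩ W ∩ ℤⁿ ≠ ∅ ⟹ σ' ⊆ W]. -/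
open scoped BigOperators

noncomputable section

/-- Image of an integer vector in `ℝⁿ`. -/
def intToR {n : ℕ} (m : Fin n → ℤ) : Fin n → ℝ := fun i => (m i : ℝ)

/-- Image of an integer vector in `ℂⁿ`. -/
def intToC {n : ℕ} (m : Fin n → ℤ) : Fin n → ℂ := fun i => (m i : ℂ)

/-- Image of a real vector in `ℂⁿ`. -/
def toC {n : ℕ} (x : Fin n → ℝ) : Fin n → ℂ := fun i => (x i : ℂ)

/-- The cone `Cone(v₁, …, v_k) = {∑ cᵢ vᵢ : cᵢ ≥ 0} ⊆ ℝⁿ`. -/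
def coneOf {n k : ℕ} (v : Fin k → (Fin n → ℝ)) : Set (Fin n → ℝ) :=
  {x | ∃ c : Fin k → ℝ, (∀ i, 0 ≤ c i) ∧ x = ∑ i, c i • v i}

/-- The cone generated by the vectors `vⱼ` for `j` in a subset `J` of the index set. -/
def coneOfSub {n k : ℕ} (v : Fin k → (Fin n → ℝ)) (J : Set (Fin k)) : Set (Fin n → ℝ) :=
  {x | ∃ c : Fin k → ℝ, (∀ i, 0 ≤ c i) ∧ (∀ i, i ∉ J → c i = 0) ∧ x = ∑ i, c i • v i}

/-- `σ ⊆ W`: every point of `σ ⊆ ℝⁿ` lies (after complexification) in the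
complex subspace `W ⊆ ℂⁿ`. -/
def subsetW {n : ℕ} (σ : Set (Fin n → ℝ)) (W : Submodule ℂ (Fin n → ℂ)) : Prop :=
  ∀ x ∈ σ, toC x ∈ W

/-- `Relint(σ) ∩ W ∩ ℤⁿ ≠ ∅`: there is a lattice point in the relative interior of `σ`
lying in `W`.  The relative interior is the intrinsic interior (interior within the
affine span). -/
def relintMeetsLattice {n : ℕ} (σ : Set (Fin n → ℝ)) (W : Submodule ℂ (Fin n → ℂ)) : Prop :=
  ∃ m : Fin n → ℤ, intToR m ∈ intrinsicInterior ℝ σ ∧ intToC m ∈ W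

/-- `τ` is a face of `σ`: `τ = σ ∩ {f = 0}` for an `ℝ`-linear functional `f`
nonnegative on `σ`. -/
def IsFaceOf {n : ℕ} (τ σ : Set (Fin n → ℝ)) : Prop :=
  ∃ f : (Fin n → ℝ) →ₗ[ℝ] ℝ, (∀ x ∈ σ, 0 ≤ f x) ∧ τ = σ ∩ {x | f x = 0}

open Set

section AuxSep
variable {E : Type*} [NormedAddCommGroup E] [NormedSpace ℝ E]

lemma mem_intrinsicInterior_iff' {s : Set E} {x : E} :
    x ∈ intrinsicInterior ℝ s ↔
      x ∈ affineSpan ℝ s ∧ ∃ ε > (0:ℝ), ∀ y, y ∈ affineSpan ℝ s → dist y x < ε → y ∈ s := by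
  constructor
  · rintro ⟨x', hx', rfl⟩
    refine ⟨x'.2, ?_⟩
    rw [mem_interior_iff_mem_nhds, Metric.mem_nhds_iff] at hx'
    obtain ⟨ε, hε, hball⟩ := hx'
    refine ⟨ε, hε, fun y hy hdy => ?_⟩
    exact hball (show (⟨y, hy⟩ : affineSpan ℝ s) ∈ Metric.ball x' ε by
      simpa [Metric.mem_ball, Subtype.dist_eq] using hdy)
  · rintro ⟨hxA, ε, hε, hball⟩
    refine ⟨⟨x, hxA⟩, ?_, rfl⟩
    rw [mem_interior_iff_mem_nhds, Metric.mem_nhds_iff]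
    refine ⟨ε, hε, fun z hz => ?_⟩
    exact hball z z.2 (by simpa [Metric.mem_ball, Subtype.dist_eq] using hz)

lemma exists_pos_move {s : Set E} {x y : E}
    (hx : x ∈ intrinsicInterior ℝ s) (hy : y ∈ s) :
    ∃ ε : ℝ, 0 < ε ∧ x + ε • (x - y) ∈ s := by
  rw [mem_intrinsicInterior_iff'] at hx
  obtain ⟨hxA, ε, hε, hball⟩ := hx
  set δ : ℝ := ε / (2 * (‖x - y‖ + 1)) with hδ
  have hpos : (0:ℝ) < 2 * (‖x - y‖ + 1) := by positivity
  have hδpos : 0 < δ := by positivity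
  refine ⟨δ, hδpos, hball _ ?_ ?_⟩
  · have := AffineSubspace.smul_vsub_vadd_mem (affineSpan ℝ s) δ hxA
      (subset_affineSpan ℝ s hy) hxA
    simpa [vsub_eq_sub, vadd_eq_add, add_comm] using this
  · have : dist (x + δ • (x - y)) x = δ * ‖x - y‖ := by
      simp [dist_eq_norm, norm_smul, abs_of_pos hδpos]
    rw [this]
    have h1 : δ * ‖x - y‖ < δ * (‖x - y‖ + 1) := by nlinarith
    have h2 : δ * (‖x - y‖ + 1) = ε / 2 := by
      field_simp [hδ]
      rw [hδ]; linear_combination div_mul_cancel₀ ε hpos.ne'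
    nlinarith

lemma affineSpan_coe_eq_span_of_zero_mem {s : Set E} (h0 : (0:E) ∈ s) :
    (affineSpan ℝ s : Set E) = (Submodule.span ℝ s : Set E) := by
  refine subset_antisymm affineSpan_subset_span ?_
  intro x hx
  have h0' := subset_affineSpan ℝ s h0
  induction hx using Submodule.span_induction with
  | mem y hy => exact subset_affineSpan ℝ s hy
  | zero => exact h0'
  | add a b _ _ ha hb =>
      simpa [vsub_eq_sub, vadd_eq_add] using
        AffineSubspace.smul_vsub_vadd_mem (affineSpan ℝ s) (1:ℝ) ha h0' hb
  | smul c a _ ha =>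
      simpa [vsub_eq_sub, vadd_eq_add] using
        AffineSubspace.smul_vsub_vadd_mem (affineSpan ℝ s) c ha h0' h0'

lemma cone_separation [FiniteDimensional ℝ E] {s : Set E}
    (hconv : Convex ℝ s) (h0 : (0:E) ∈ s)
    (hsmul : ∀ x ∈ s, (2:ℝ) • x ∈ s)
    {x : E} (hx : x ∈ s) (hni : x ∉ intrinsicInterior ℝ s) :
    ∃ g : E →L[ℝ] ℝ, (∀ y ∈ s, 0 ≤ g y) ∧ g x = 0 ∧ ∃ y ∈ s, 0 < g y := by
  classical
  set V := Submodule.span ℝ s with hV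
  have hsub : s ⊆ (V : Set E) := Submodule.subset_span
  have hAspan : (affineSpan ℝ s : Set E) = (V : Set E) :=
    affineSpan_coe_eq_span_of_zero_mem h0
  set s' : Set V := (Subtype.val : V → E) ⁻¹' s with hs'
  have hconv' : Convex ℝ s' := hconv.linear_preimage V.subtype
  -- get an interior point of s' from the intrinsic interior of s
  obtain ⟨p, hpI⟩ := Set.Nonempty.intrinsicInterior hconv ⟨0, h0⟩
  have hpI' := hpI
  rw [mem_intrinsicInterior_iff'] at hpI'
  obtain ⟨hpA, ε, hε, hball⟩ := hpI'
  have hpV : p ∈ V := by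
    have : p ∈ (V : Set E) := by rw [← hAspan]; exact hpA
    exact this
  set p' : V := ⟨p, hpV⟩ with hp'
  have hp'int : p' ∈ interior s' := by
    rw [mem_interior_iff_mem_nhds, Metric.mem_nhds_iff]
    refine ⟨ε, hε, fun z hz => ?_⟩
    refine hball (z : E) ?_ (by simpa [Metric.mem_ball, Subtype.dist_eq] using hz)
    show (z : E) ∈ (affineSpan ℝ s : Set E)
    rw [hAspan]; exact z.2
  -- x is not interior in s'
  have hxV : x ∈ V := hsub hx
  set x' : V := ⟨x, hxV⟩ with hx'
  have hx'ni : x' ∉ interior s' := by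
    intro hint
    apply hni
    rw [mem_intrinsicInterior_iff']
    rw [mem_interior_iff_mem_nhds, Metric.mem_nhds_iff] at hint
    obtain ⟨ε', hε', hball'⟩ := hint
    refine ⟨show x ∈ (affineSpan ℝ s : Set E) by rw [hAspan]; exact hxV, ε', hε',
      fun y hy hdy => ?_⟩
    have hyV : y ∈ V := by
      have : y ∈ (V : Set E) := by rw [← hAspan]; exact hy
      exact this
    exact hball' (show (⟨y, hyV⟩ : V) ∈ Metric.ball x' ε' by
      simpa [Metric.mem_ball, Subtype.dist_eq] using hdy)
  obtain ⟨f, hf⟩ := geometric_hahn_banach_open_point (hconv'.interior) isOpen_interior hx'ni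
  -- f ≤ f x' on all of s'
  have hle : ∀ a ∈ s', f a ≤ f x' := by
    intro a ha
    by_contra hgt
    push_neg at hgt
    obtain ⟨d, hd⟩ : ∃ d : ℝ, d = f a - f x' := ⟨_, rfl⟩
    have hdpos : 0 < d := by rw [hd]; linarith
    obtain ⟨M, hM⟩ : ∃ M : ℝ, M = |f p' - f a| + 1 := ⟨_, rfl⟩
    have hMpos : 0 < M := by rw [hM]; positivity
    obtain ⟨t, ht⟩ : ∃ t : ℝ, t = min 1 (d / (2 * M)) := ⟨_, rfl⟩
    have htpos : 0 < t := ht ▸ lt_min one_pos (by positivity)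
    have ht1 : t ≤ 1 := ht ▸ min_le_left _ _
    have hcombo : t • p' + (1 - t) • a ∈ interior s' :=
      hconv'.combo_interior_self_mem_interior hp'int ha htpos (by linarith) (by ring)
    have hval : f (t • p' + (1 - t) • a) < f x' := hf _ hcombo
    have hcalc : f (t • p' + (1 - t) • a) = f a + t * (f p' - f a) := by
      simp [map_add, map_smul, smul_eq_mul]; ring
    have hb1 : t * (f p' - f a) ≥ -(t * M) := by
      have h1 : f p' - f a ≥ -M := by
        have := neg_abs_le (f p' - f a); rw [hM]; linarith
      nlinarith
    have hb2 : t * M ≤ d / 2 := by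
      have h1 : t ≤ d / (2 * M) := ht ▸ min_le_right _ _
      have h2 : t * M ≤ d / (2 * M) * M := mul_le_mul_of_nonneg_right h1 hMpos.le
      have h3 : d / (2 * M) * M = d / 2 := by field_simp
      linarith
    rw [hcalc] at hval
    linarith [hd, hdpos, hb1, hb2, hval]
  -- f x' = 0
  have h0' : (0:V) ∈ s' := by simpa [hs'] using h0
  have hfx0 : f x' = 0 := by
    have h1 : (0:ℝ) ≤ f x' := by simpa using hle 0 h0'
    have h2x : ((2:ℝ) • x') ∈ s' := by
      have := hsmul x hx
      simpa [hs', Set.mem_preimage] using this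
    have h2 : f ((2:ℝ) • x') ≤ f x' := hle _ h2x
    rw [map_smul, smul_eq_mul] at h2
    linarith
  -- extend −f to E via a projection
  obtain ⟨q, hq⟩ := V.exists_isCompl
  set π : E →ₗ[ℝ] V := V.linearProjOfIsCompl q hq with hπ
  set glin : E →ₗ[ℝ] ℝ := -((f : V →ₗ[ℝ] ℝ).comp π) with hglin
  set g : E →L[ℝ] ℝ := LinearMap.toContinuousLinearMap glin with hg
  have hgval : ∀ (y : E) (hy : y ∈ V), g y = -(f ⟨y, hy⟩) := by
    intro y hy
    have : π y = ⟨y, hy⟩ := Submodule.linearProjOfIsCompl_apply_left hq ⟨y, hy⟩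
    simp [hg, hglin, this]
  refine ⟨g, fun y hy => ?_, ?_, ⟨p, intrinsicInterior_subset hpI, ?_⟩⟩
  · rw [hgval y (hsub hy)]
    have := hle ⟨y, hsub hy⟩ hy
    rw [hfx0] at this
    linarith
  · rw [hgval x hxV]
    simp only [← hx', hfx0, neg_zero]
  · rw [hgval p hpV]
    have := hf p' hp'int
    rw [hfx0] at this
    simpa [hp'] using this
end AuxSep

section ConeLemmas

variable {n k : ℕ} {w : Fin k → (Fin n → ℝ)}

lemma coneOf_zero_mem (w : Fin k → (Fin n → ℝ)) : (0 : Fin n → ℝ) ∈ coneOf w :=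
  ⟨0, fun _ => le_refl 0, by simp⟩

lemma coneOf_gen_mem (w : Fin k → (Fin n → ℝ)) (j : Fin k) : w j ∈ coneOf w := by
  refine ⟨fun i => if i = j then 1 else 0, fun i => by positivity, ?_⟩
  rw [Finset.sum_eq_single j]
  · simp
  · intro b _ hb; simp [hb]
  · simp

lemma coneOf_add {x y : Fin n → ℝ} (hx : x ∈ coneOf w) (hy : y ∈ coneOf w) :
    x + y ∈ coneOf w := by
  obtain ⟨c, hc, rfl⟩ := hx
  obtain ⟨d, hd, rfl⟩ := hy
  exact ⟨c + d, fun i => add_nonneg (hc i) (hd i), by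
    rw [← Finset.sum_add_distrib]; congr 1; ext i; simp [add_smul]; ring⟩

lemma coneOf_smul {t : ℝ} (htt : 0 ≤ t) {x : Fin n → ℝ} (hx : x ∈ coneOf w) :
    t • x ∈ coneOf w := by
  obtain ⟨c, hc, rfl⟩ := hx
  exact ⟨t • c, fun i => mul_nonneg htt (hc i), by
    rw [Finset.smul_sum]; congr 1; ext i; simp [smul_smul]; ring⟩

lemma coneOf_convex : Convex ℝ (coneOf w) := by
  intro x hx y hy a b ha hb _
  exact coneOf_add (coneOf_smul ha hx) (coneOf_smul hb hy)

lemma clm_nonneg_on_cone (f : (Fin n → ℝ) →L[ℝ] ℝ) (hf : ∀ i, 0 ≤ f (w i)) :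
    ∀ x ∈ coneOf w, 0 ≤ f x := by
  rintro x ⟨c, hc, rfl⟩
  rw [map_sum]
  refine Finset.sum_nonneg fun i _ => ?_
  rw [map_smul, smul_eq_mul]
  exact mul_nonneg (hc i) (hf i)

end ConeLemmas

/-- If every face of a rational polyhedral cone `σ` satisfies the (†) implication for `W`,
then every rational polyhedral cone contained in `σ` satisfies it as well. -/
theorem dagger_of_subcone (n k : ℕ) (v : Fin k → Fin n → ℤ)
    (W : Submodule ℂ (Fin n → ℂ))
    (h : ∀ τ : Set (Fin n → ℝ), IsFaceOf τ (coneOf fun i => intToR (v i)) →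
      relintMeetsLattice τ W → subsetW τ W) :
    ∀ (k' : ℕ) (v' : Fin k' → Fin n → ℤ),
      coneOf (fun i => intToR (v' i)) ⊆ coneOf (fun i => intToR (v i)) →
      relintMeetsLattice (coneOf fun i => intToR (v' i)) W →
      subsetW (coneOf fun i => intToR (v' i)) W := by
  classical
  intro k' v' hsub hrel
  obtain ⟨m, hmI, hmW⟩ := hrel
  have hmσ' : intToR m ∈ coneOf (fun i => intToR (v' i)) := intrinsicInterior_subset hmI
  have hmσ : intToR m ∈ coneOf (fun i => intToR (v i)) := hsub hmσ'
  -- The dual slice F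
  set F : Set ((Fin n → ℝ) →L[ℝ] ℝ) :=
    {f | (∀ i, 0 ≤ f (intToR (v i))) ∧ f (intToR m) = 0} with hF
  have hFconv : Convex ℝ F := by
    intro f hf g hg a b ha hb hab
    constructor
    · intro i
      have := hf.1 i; have := hg.1 i
      simp only [ContinuousLinearMap.add_apply, ContinuousLinearMap.coe_smul',
        Pi.smul_apply, smul_eq_mul]
      nlinarith
    · simp only [ContinuousLinearMap.add_apply, ContinuousLinearMap.coe_smul',
        Pi.smul_apply, smul_eq_mul, hf.2, hg.2]
      ring
  have hF0 : (0 : (Fin n → ℝ) →L[ℝ] ℝ) ∈ F := ⟨fun i => le_refl 0, rfl⟩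
  obtain ⟨f₀, hf₀I⟩ := Set.Nonempty.intrinsicInterior hFconv ⟨0, hF0⟩
  have hf₀F : f₀ ∈ F := intrinsicInterior_subset hf₀I
  have hf₀σ : ∀ x ∈ coneOf (fun i => intToR (v i)), 0 ≤ f₀ x :=
    clm_nonneg_on_cone f₀ hf₀F.1
  -- minimality of the face cut out by f₀
  have key : ∀ f ∈ F, ∀ x ∈ coneOf (fun i => intToR (v i)), f₀ x = 0 → f x = 0 := by
    intro f hf x hx hx0
    obtain ⟨ε, hε, hg⟩ := exists_pos_move hf₀I hf
    have hgx : 0 ≤ (f₀ + ε • (f₀ - f)) x := clm_nonneg_on_cone _ hg.1 x hx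
    have hfx : 0 ≤ f x := clm_nonneg_on_cone f hf.1 x hx
    simp only [ContinuousLinearMap.add_apply, ContinuousLinearMap.coe_smul',
      Pi.smul_apply, ContinuousLinearMap.coe_sub', Pi.sub_apply, smul_eq_mul, hx0] at hgx
    nlinarith
  -- the face τ
  set τ : Set (Fin n → ℝ) :=
    coneOf (fun i => intToR (v i)) ∩ {x | f₀ x = 0} with hτ
  have hστ : coneOf (fun i => intToR (v' i)) ⊆ τ := by
    intro x hx
    refine ⟨hsub hx, ?_⟩
    obtain ⟨ε, hε, hz⟩ := exists_pos_move hmI hx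
    have h1 : 0 ≤ f₀ (intToR m + ε • (intToR m - x)) := hf₀σ _ (hsub hz)
    have h2 : 0 ≤ f₀ x := hf₀σ _ (hsub hx)
    have h3 : f₀ (intToR m) = 0 := hf₀F.2
    rw [map_add, map_smul, map_sub, h3, smul_eq_mul] at h1
    show f₀ x = 0
    nlinarith
  have hτconv : Convex ℝ τ := by
    intro x hx y hy a b ha hb hab
    refine ⟨coneOf_convex hx.1 hy.1 ha hb hab, ?_⟩
    show f₀ (a • x + b • y) = 0
    rw [map_add, map_smul, map_smul, hx.2, hy.2]
    simp
  have hτ0 : (0 : Fin n → ℝ) ∈ τ := ⟨coneOf_zero_mem _, by simp⟩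
  have hτ2 : ∀ x ∈ τ, (2:ℝ) • x ∈ τ := by
    intro x hx
    refine ⟨coneOf_smul (by norm_num) hx.1, ?_⟩
    show f₀ ((2:ℝ) • x) = 0
    rw [map_smul, hx.2]; simp
  -- m is in the relative interior of τ
  have hmτ : intToR m ∈ τ := hστ hmσ'
  have hmτint : intToR m ∈ intrinsicInterior ℝ τ := by
    by_contra hni
    obtain ⟨g, hg1, hg2, y₀, hy₀τ, hy₀⟩ := cone_separation hτconv hτ0 hτ2 hmτ hni
    set C : ℝ := ∑ i : Fin k,
      (if f₀ (intToR (v i)) = 0 then 0 else max 0 (-(g (intToR (v i))) / f₀ (intToR (v i)))) with hC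
    have hCi_nonneg : ∀ i : Fin k,
        0 ≤ (if f₀ (intToR (v i)) = 0 then 0 else max 0 (-(g (intToR (v i))) / f₀ (intToR (v i)))) := by
      intro i; split
      · exact le_refl 0
      · exact le_max_left _ _
    have hCge : ∀ i : Fin k,
        (if f₀ (intToR (v i)) = 0 then 0 else max 0 (-(g (intToR (v i))) / f₀ (intToR (v i)))) ≤ C := by
      intro i
      exact Finset.single_le_sum (fun j _ => hCi_nonneg j) (Finset.mem_univ i)
    have hfF : g + C • f₀ ∈ F := by
      constructor
      · intro i
        simp only [ContinuousLinearMap.add_apply, ContinuousLinearMap.coe_smul',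
          Pi.smul_apply, smul_eq_mul]
        by_cases h0 : f₀ (intToR (v i)) = 0
        · have hwiτ : intToR (v i) ∈ τ := ⟨coneOf_gen_mem _ i, h0⟩
          have := hg1 _ hwiτ
          rw [h0]; linarith
        · have hpos : 0 < f₀ (intToR (v i)) := lt_of_le_of_ne (hf₀F.1 i) (Ne.symm h0)
          have hCle := hCge i
          rw [if_neg h0] at hCle
          have h1 : -(g (intToR (v i))) / f₀ (intToR (v i)) ≤ max 0 (-(g (intToR (v i))) / f₀ (intToR (v i))) :=
            le_max_right _ _
          have h2 : -(g (intToR (v i))) / f₀ (intToR (v i)) ≤ C := le_trans h1 hCle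
          rw [div_le_iff₀ hpos] at h2
          nlinarith
      · simp only [ContinuousLinearMap.add_apply, ContinuousLinearMap.coe_smul',
          Pi.smul_apply, smul_eq_mul, hf₀F.2, hg2]
        ring
    have hzero := key _ hfF y₀ hy₀τ.1 hy₀τ.2
    have hy₀0 : f₀ y₀ = 0 := hy₀τ.2
    simp only [ContinuousLinearMap.add_apply, ContinuousLinearMap.coe_smul',
      Pi.smul_apply, smul_eq_mul, hy₀0] at hzero
    linarith
  -- τ is a face, apply the hypothesis
  have hface : IsFaceOf τ (coneOf fun i => intToR (v i)) :=
    ⟨f₀.toLinearMap, hf₀σ, rfl⟩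
  have hτW : subsetW τ W := h τ hface ⟨m, hmτint, hmW⟩
  intro x hx
  exact hτW x (hστ hx)
end
end

section
/- Fix n ∈ ℕ. Let v₁, …, v_k ∈ ℤⁿ be ℝ-linearly independent with k ≥ 2, let σ = Cone(v₁, …, v_k), and let W ⊆ ℂⁿ be a complex vector subspace. Assume that every proper face τ of σ (i.e. τ = Cone(vⱼ : j ∈ J) for a proper subset J ⊊ {1,…,k}) satisfies the implication [Relint(τ) ∩ W ∩ ℤⁿ ≠ ∅ ⟹ τ ⊆ W]. If Relint(σ) ∩ W ∩ ℤⁿ ≠ ∅, then either σ ⊆ W, or any two elements of Relint(σ) ∩ W ∩ ℤⁿ are ℝ-linearly dependent (i.e. all lattice points of W in Relint(σ) lie on a single ray). -/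
open scoped BigOperators

noncomputable section

/-! ### Auxiliary lemmas -/

lemma coneOf_eq_coneOfSub {n k : ℕ} (v : Fin k → (Fin n → ℝ)) :
    coneOf v = coneOfSub v Set.univ := by
  ext x
  constructor
  · rintro ⟨c, h0, rfl⟩
    exact ⟨c, h0, fun i hi => absurd (Set.mem_univ i) hi, rfl⟩
  · rintro ⟨c, h0, _, rfl⟩
    exact ⟨c, h0, rfl⟩

/-- The linear combination map. -/
def combMap {n k : ℕ} (v : Fin k → (Fin n → ℝ)) : (Fin k → ℝ) →ₗ[ℝ] (Fin n → ℝ) where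
  toFun c := ∑ i, c i • v i
  map_add' a b := by simp [add_smul, Finset.sum_add_distrib]
  map_smul' r a := by simp [smul_smul, Finset.smul_sum]

lemma coeff_unique {n k : ℕ} {v : Fin k → (Fin n → ℝ)} (hli : LinearIndependent ℝ v)
    {a b : Fin k → ℝ} (h : ∑ i, a i • v i = ∑ i, b i • v i) : a = b := by
  have h2 : ∑ i, (a - b) i • v i = 0 := by
    simp [sub_smul, Finset.sum_sub_distrib, h]
  have := Fintype.linearIndependent_iff.mp hli (a - b) h2
  funext i
  simpa [sub_eq_zero] using this i

lemma den_dvd_int_mul (r : ℚ) (a : ℤ) (h : (r.den : ℤ) ∣ a) : ∃ z : ℤ, (z : ℚ) = a * r := by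
  obtain ⟨b, rfl⟩ := h
  refine ⟨b * r.num, ?_⟩
  push_cast
  have hden : ((r.den : ℚ)) * r = r.num := by
    have hne : (r.den : ℚ) ≠ 0 := by exact_mod_cast r.den_ne_zero
    have := Rat.num_div_den r
    field_simp [hne] at this ⊢
    exact this.symm
  calc (b : ℚ) * r.num = b * ((r.den : ℚ) * r) := by rw [hden]
    _ = (r.den : ℚ) * b * r := by ring

lemma toC_sum {n k : ℕ} (c : Fin k → ℝ) (w : Fin k → (Fin n → ℝ)) :
    toC (∑ i, c i • w i) = ∑ i, ((c i : ℂ)) • toC (w i) := by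
  funext l
  simp only [toC, Finset.sum_apply, Pi.smul_apply, smul_eq_mul]
  push_cast
  rfl

/-- Characterization of the relative interior of a simplicial cone. -/
lemma mem_relint_iff {n k : ℕ} {v : Fin k → (Fin n → ℝ)} (hli : LinearIndependent ℝ v)
    (J : Set (Fin k)) (x : Fin n → ℝ) :
    x ∈ intrinsicInterior ℝ (coneOfSub v J) ↔
      ∃ c : Fin k → ℝ, (∀ i ∈ J, 0 < c i) ∧ (∀ i ∉ J, c i = 0) ∧ x = ∑ i, c i • v i := by
  classical
  set S : Set (Fin n → ℝ) := coneOfSub v J with hS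
  constructor
  · intro hx
    have hxS : x ∈ S := intrinsicInterior_subset hx
    obtain ⟨c, hc0, hcJ, hcx⟩ := hxS
    refine ⟨c, ?_, hcJ, hcx⟩
    intro i0 hi0
    obtain ⟨y, hy, hyx⟩ := mem_intrinsicInterior.mp hx
    have h0S : (0 : Fin n → ℝ) ∈ S := ⟨0, by simp, by simp, by simp⟩
    have hviS : v i0 ∈ S := by
      refine ⟨fun i => if i = i0 then 1 else 0, ?_, ?_, ?_⟩
      · intro i; by_cases h : i = i0 <;> simp [h]
      · intro i hi
        have : i ≠ i0 := fun h => hi (h ▸ hi0)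
        simp [this]
      · simp [ite_smul]
    have hmem : ∀ ε : ℝ, x + ε • ((0 : Fin n → ℝ) - v i0) ∈ affineSpan ℝ S := by
      intro ε
      have := AffineSubspace.smul_vsub_vadd_mem (affineSpan ℝ S) ε
        (subset_affineSpan ℝ S h0S) (subset_affineSpan ℝ S hviS)
        (subset_affineSpan ℝ S (intrinsicInterior_subset hx))
      simpa [vsub_eq_sub, vadd_eq_add, add_comm] using this
    set γ : ℝ → affineSpan ℝ S := fun ε => ⟨x + ε • ((0 : Fin n → ℝ) - v i0), hmem ε⟩ with hγ
    have hγc : Continuous γ := by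
      apply Continuous.subtype_mk
      exact continuous_const.add (continuous_id.smul continuous_const)
    have hγ0 : γ 0 = y := by
      apply Subtype.ext
      simp [hγ, hyx]
    have hopen : IsOpen (γ ⁻¹' interior ((↑) ⁻¹' S : Set (affineSpan ℝ S))) :=
      isOpen_interior.preimage hγc
    have h0mem : (0 : ℝ) ∈ γ ⁻¹' interior ((↑) ⁻¹' S : Set (affineSpan ℝ S)) := by
      simp only [Set.mem_preimage, hγ0]; exact hy
    obtain ⟨δ, hδ, hball⟩ := Metric.isOpen_iff.mp hopen 0 h0mem
    have hεmem : γ (δ / 2) ∈ interior ((↑) ⁻¹' S : Set (affineSpan ℝ S)) := by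
      apply hball
      simp only [Metric.mem_ball, Real.dist_eq, sub_zero]
      rw [abs_of_pos (by linarith)]
      linarith
    have hSmem' := interior_subset hεmem
    rw [Set.mem_preimage] at hSmem'
    have hSmem : x + (δ / 2) • ((0 : Fin n → ℝ) - v i0) ∈ S := hSmem'
    obtain ⟨c₂, hc₂0, hc₂J, hc₂x⟩ := hSmem
    have hkey : x + (δ / 2) • ((0 : Fin n → ℝ) - v i0)
        = ∑ i, (c i - if i = i0 then δ / 2 else 0) • v i := by
      rw [hcx]
      simp only [sub_smul, ite_smul, zero_smul, Finset.sum_sub_distrib, zero_sub, smul_neg,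
        smul_zero, Finset.sum_ite_eq', Finset.mem_univ, if_true]
      abel
    have hc₂ : c₂ = fun i => c i - if i = i0 then δ / 2 else 0 := by
      apply coeff_unique hli
      rw [← hc₂x, hkey]
    have := hc₂0 i0
    rw [hc₂] at this
    norm_num at this
    linarith
  · rintro ⟨c, hcJ, hcnJ, rfl⟩
    have hc0 : ∀ i, 0 ≤ c i := by
      intro i
      by_cases h : i ∈ J
      · exact (hcJ i h).le
      · simp [hcnJ i h]
    have hxS : (∑ i, c i • v i) ∈ S := ⟨c, hc0, hcnJ, rfl⟩
    have hker : LinearMap.ker (combMap v) = ⊥ := by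
      rw [LinearMap.ker_eq_bot']
      intro g hg
      exact funext (Fintype.linearIndependent_iff.mp hli g hg)
    obtain ⟨P, hP⟩ := (combMap v).exists_leftInverse_of_injective hker
    have hPT : ∀ d : Fin k → ℝ, P (∑ i, d i • v i) = d := by
      intro d
      have := DFunLike.congr_fun hP d
      simpa [combMap] using this
    have hPcont : Continuous P := P.continuous_of_finiteDimensional
    set K : Submodule ℝ (Fin k → ℝ) :=
      { carrier := {d | ∀ i, i ∉ J → d i = 0}
        add_mem' := fun ha hb i hi => by simp [ha i hi, hb i hi]
        zero_mem' := fun i _ => rfl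
        smul_mem' := fun r a ha i hi => by simp [ha i hi] } with hK
    set V : Submodule ℝ (Fin n → ℝ) := K.map (combMap v) with hV
    have hSV : S ⊆ (V : Set (Fin n → ℝ)) := by
      rintro z ⟨d, hd0, hdJ, rfl⟩
      exact ⟨d, hdJ, rfl⟩
    have hspan : (affineSpan ℝ S : Set (Fin n → ℝ)) ⊆ (V : Set (Fin n → ℝ)) := by
      intro z hz
      have hle : affineSpan ℝ S ≤ V.toAffineSubspace := by
        rw [affineSpan_le]
        intro w hw
        exact hSV hw
      exact hle hz
    set O : Set (Fin n → ℝ) := {z | ∀ i ∈ J, 0 < P z i} with hO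
    have hOopen : IsOpen O := by
      have : O = ⋂ i ∈ J, {z | 0 < P z i} := by
        ext z; simp [hO]
      rw [this]
      exact (Set.toFinite J).isOpen_biInter fun i _ =>
        isOpen_Ioi.preimage ((continuous_apply i).comp hPcont)
    have hsub : ((↑) ⁻¹' O : Set (affineSpan ℝ S)) ⊆ ((↑) ⁻¹' S : Set (affineSpan ℝ S)) := by
      rintro ⟨z, hz⟩ hzO
      obtain ⟨d, hdJ, hdz⟩ := hspan hz
      have hzd : z = ∑ i, d i • v i := hdz.symm
      have hPz : P z = d := by rw [hzd]; exact hPT d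
      have hdpos : ∀ i ∈ J, 0 < d i := by
        intro i hi
        have := hzO i hi
        rwa [hPz] at this
      refine ⟨d, ?_, hdJ, hzd⟩
      intro i
      by_cases h : i ∈ J
      · exact (hdpos i h).le
      · simp [hdJ i h]
    refine mem_intrinsicInterior.mpr
      ⟨⟨∑ i, c i • v i, subset_affineSpan ℝ S hxS⟩, ?_, rfl⟩
    have hyO : (⟨∑ i, c i • v i, subset_affineSpan ℝ S hxS⟩ : affineSpan ℝ S)
        ∈ ((↑) ⁻¹' O : Set (affineSpan ℝ S)) := by
      show (∑ i, c i • v i) ∈ O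
      intro i hi
      rw [hPT c]
      exact hcJ i hi
    exact interior_maximal hsub (hOopen.preimage continuous_subtype_val) hyO

/-- Coefficients of an integer vector with respect to independent integer vectors are
rational. -/
lemma rat_coeffs {n k : ℕ} (v : Fin k → Fin n → ℤ)
    (hli : LinearIndependent ℝ fun i => intToR (v i)) (m : Fin n → ℤ) (c : Fin k → ℝ)
    (h : intToR m = ∑ i, c i • intToR (v i)) :
    ∃ cq : Fin k → ℚ, ∀ i, (cq i : ℝ) = c i := by
  classical
  set Aq : Matrix (Fin n) (Fin k) ℚ := Matrix.of fun l i => (v i l : ℚ) with hAq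
  have hinj : LinearMap.ker Aq.mulVecLin = ⊥ := by
    rw [LinearMap.ker_eq_bot']
    intro g hg
    have hR : ∑ i, (g i : ℝ) • intToR (v i) = 0 := by
      funext l
      have hgl := congrFun hg l
      simp only [Matrix.mulVecLin_apply, Matrix.mulVec, dotProduct, hAq,
        Matrix.of_apply, Pi.zero_apply] at hgl
      have : ∑ i, (g i : ℚ) * (v i l : ℚ) = 0 := by
        rw [← hgl]; exact Finset.sum_congr rfl fun i _ => mul_comm _ _
      have hR' : ∑ i, (g i : ℝ) * ((v i l : ℤ) : ℝ) = 0 := by exact_mod_cast this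
      simpa [intToR, Finset.sum_apply, Pi.smul_apply, smul_eq_mul] using hR'
    have := Fintype.linearIndependent_iff.mp hli (fun i => (g i : ℝ)) hR
    funext i
    have h0 : ((g i : ℝ)) = 0 := by simpa using this i
    show g i = 0
    exact_mod_cast h0
  obtain ⟨B, hB⟩ := Aq.mulVecLin.exists_leftInverse_of_injective hinj
  set Bm : Matrix (Fin k) (Fin n) ℚ := LinearMap.toMatrix' B with hBm
  have hBA : Bm * Aq = 1 := by
    apply Matrix.toLin'.injective
    rw [Matrix.toLin'_mul, Matrix.toLin'_one, Matrix.toLin'_toMatrix',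
      show (Matrix.toLin' Aq : (Fin k → ℚ) →ₗ[ℚ] (Fin n → ℚ)) = Aq.mulVecLin from rfl]
    exact hB
  refine ⟨fun i => ∑ l, Bm i l * (m l : ℚ), ?_⟩
  set Ar : Matrix (Fin n) (Fin k) ℝ := Matrix.of fun l i => ((v i l : ℤ) : ℝ) with hAr
  set Br : Matrix (Fin k) (Fin n) ℝ := Matrix.of fun i l => ((Bm i l : ℚ) : ℝ) with hBr
  have hBAr : Br * Ar = 1 := by
    ext i j
    have := congrFun (congrFun hBA i) j
    simp only [Matrix.mul_apply, hAq, Matrix.of_apply] at this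
    simp only [Matrix.mul_apply, hBr, hAr, Matrix.of_apply]
    have hcast : ((∑ l, Bm i l * (v j l : ℚ) : ℚ) : ℝ)
        = ∑ l, ((Bm i l : ℚ) : ℝ) * ((v j l : ℤ) : ℝ) := by
      push_cast
      rfl
    rw [← hcast, this]
    by_cases hij : i = j <;> simp [hij, Matrix.one_apply]
  have hArc : Ar.mulVec c = intToR m := by
    funext l
    have := congrFun h l
    simp only [intToR, Finset.sum_apply, Pi.smul_apply, smul_eq_mul] at this
    simp only [Matrix.mulVec, dotProduct, hAr, Matrix.of_apply, intToR]
    rw [this]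
    exact Finset.sum_congr rfl fun i _ => mul_comm _ _
  have hc : Br.mulVec (intToR m) = c := by
    rw [← hArc, Matrix.mulVec_mulVec, hBAr, Matrix.one_mulVec]
  intro i
  have := congrFun hc i
  simp only [Matrix.mulVec, dotProduct, hBr, Matrix.of_apply, intToR] at this
  rw [← this]
  push_cast
  rfl

/-- For a simplicial rational cone `σ = Cone(v₁,…,v_k)`, `k ≥ 2`, whose proper faces all
satisfy the (†) implication for `W`: if `Relint(σ)` contains a lattice point of `W`, then
either `σ ⊆ W` or all lattice points of `W` in `Relint(σ)` are pairwise `ℝ`-linearly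
dependent. -/
theorem dagger_claim_simplicial (n k : ℕ) (hk : 2 ≤ k) (v : Fin k → Fin n → ℤ)
    (hli : LinearIndependent ℝ fun i => intToR (v i))
    (W : Submodule ℂ (Fin n → ℂ))
    (hfaces : ∀ J : Set (Fin k), J ≠ Set.univ →
      relintMeetsLattice (coneOfSub (fun i => intToR (v i)) J) W →
      subsetW (coneOfSub (fun i => intToR (v i)) J) W)
    (hmeet : relintMeetsLattice (coneOf fun i => intToR (v i)) W) :
    subsetW (coneOf fun i => intToR (v i)) W ∨
      ∀ m m' : Fin n → ℤ,
        intToR m ∈ intrinsicInterior ℝ (coneOf fun i => intToR (v i)) → intToC m ∈ W →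
        intToR m' ∈ intrinsicInterior ℝ (coneOf fun i => intToR (v i)) → intToC m' ∈ W →
        ¬ LinearIndependent ℝ ![intToR m, intToR m'] := by
  classical
  by_cases hdep : ∀ m m' : Fin n → ℤ,
      intToR m ∈ intrinsicInterior ℝ (coneOf fun i => intToR (v i)) → intToC m ∈ W →
      intToR m' ∈ intrinsicInterior ℝ (coneOf fun i => intToR (v i)) → intToC m' ∈ W →
      ¬ LinearIndependent ℝ ![intToR m, intToR m']
  · exact Or.inr hdep
  left
  push_neg at hdep
  obtain ⟨m, m', hm1, hm2, hm3, hm4, hLI⟩ := hdep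
  set u : Fin k → Fin n → ℝ := fun i => intToR (v i) with hu
  rw [coneOf_eq_coneOfSub] at hm1 hm3
  obtain ⟨c, hcpos, -, hcx⟩ := (mem_relint_iff hli Set.univ _).mp hm1
  obtain ⟨c', hc'pos, -, hc'x⟩ := (mem_relint_iff hli Set.univ _).mp hm3
  obtain ⟨cq, hcq⟩ := rat_coeffs v hli m c hcx
  obtain ⟨cq', hcq'⟩ := rat_coeffs v hli m' c' hc'x
  have hcqpos : ∀ i, 0 < cq i := by
    intro i
    have h1 := hcpos i (Set.mem_univ i)
    rw [← hcq i] at h1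
    exact_mod_cast h1
  have hcq'pos : ∀ i, 0 < cq' i := by
    intro i
    have h1 := hc'pos i (Set.mem_univ i)
    rw [← hcq' i] at h1
    exact_mod_cast h1
  have hmq : ∀ l, (m l : ℚ) = ∑ i, cq i * (v i l : ℚ) := by
    intro l
    have hx := congrFun hcx l
    simp only [hu, intToR, Finset.sum_apply, Pi.smul_apply, smul_eq_mul] at hx
    have hx2 : ((m l : ℤ) : ℝ) = ∑ i, (cq i : ℝ) * ((v i l : ℤ) : ℝ) := by
      rw [hx]; exact Finset.sum_congr rfl fun i _ => by rw [hcq i]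
    exact_mod_cast hx2
  have hm'q : ∀ l, (m' l : ℚ) = ∑ i, cq' i * (v i l : ℚ) := by
    intro l
    have hx := congrFun hc'x l
    simp only [hu, intToR, Finset.sum_apply, Pi.smul_apply, smul_eq_mul] at hx
    have hx2 : ((m' l : ℤ) : ℝ) = ∑ i, (cq' i : ℝ) * ((v i l : ℤ) : ℝ) := by
      rw [hx]; exact Finset.sum_congr rfl fun i _ => by rw [hcq' i]
    exact_mod_cast hx2
  have hkpos : 0 < k := by omega
  haveI : Nonempty (Fin k) := ⟨⟨0, hkpos⟩⟩
  have hne : (Finset.univ : Finset (Fin k)).Nonempty := Finset.univ_nonempty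
  set t : ℚ := Finset.univ.inf' hne fun i => cq' i / cq i with ht
  obtain ⟨i0, -, hti0⟩ : ∃ i ∈ Finset.univ, t = cq' i / cq i :=
    Finset.exists_mem_eq_inf' hne _
  have htle : ∀ i, t ≤ cq' i / cq i := fun i => Finset.inf'_le _ (Finset.mem_univ i)
  have htc : ∀ i, t * cq i ≤ cq' i := by
    intro i
    have h1 := htle i
    rwa [le_div_iff₀ (hcqpos i)] at h1
  have hti0' : t * cq i0 = cq' i0 := by
    rw [hti0, div_mul_cancel₀]
    exact (hcqpos i0).ne'
  set J : Set (Fin k) := {i | t * cq i < cq' i} with hJ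
  have hi0J : i0 ∉ J := by simp [hJ, hti0']
  have hJne_univ : J ≠ Set.univ := fun h => hi0J (h ▸ Set.mem_univ i0)
  set d : Fin k → ℚ := fun i => cq' i - t * cq i with hd
  have hd0 : ∀ i, 0 ≤ d i := fun i => sub_nonneg.mpr (htc i)
  have hdJ0 : ∀ i, i ∉ J → d i = 0 := by
    intro i hi
    have h1 : ¬ t * cq i < cq' i := hi
    have h2 : cq' i = t * cq i := le_antisymm (not_lt.mp h1) (htc i)
    simp [hd, h2]
  have hdJpos : ∀ i ∈ J, 0 < d i := fun i hi => sub_pos.mpr hi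
  have hJnonempty : J.Nonempty := by
    rw [Set.nonempty_iff_ne_empty]
    intro hempty
    have hall : ∀ i, cq' i = t * cq i := by
      intro i
      have hi : i ∉ J := by rw [hempty]; exact Set.notMem_empty i
      have h1 := hdJ0 i hi
      simp only [hd] at h1
      linarith
    have hrel : (t : ℝ) • intToR m + (-1 : ℝ) • intToR m' = 0 := by
      funext l
      have h1 : (m' l : ℚ) = t * (m l : ℚ) := by
        rw [hm'q l, hmq l, Finset.mul_sum]
        exact Finset.sum_congr rfl fun i _ => by rw [hall i]; ring
      have h2 : ((m' l : ℤ) : ℝ) = (t : ℝ) * ((m l : ℤ) : ℝ) := by exact_mod_cast h1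
      simp only [Pi.add_apply, Pi.smul_apply, intToR, smul_eq_mul, Pi.zero_apply]
      rw [h2]; ring
    obtain ⟨-, h10⟩ := LinearIndependent.pair_iff.mp hLI (t : ℝ) (-1) hrel
    norm_num at h10
  set q : ℕ := ∏ i, (d i).den with hq
  have hqposQ : (0 : ℚ) < (q : ℚ) := by
    have : 0 < q := Finset.prod_pos fun i _ => (d i).pos
    exact_mod_cast this
  have hqd : ∀ i, ∃ z : ℤ, (z : ℚ) = ((q : ℤ) : ℚ) * d i := by
    intro i
    exact den_dvd_int_mul (d i) (q : ℤ)
      (Int.natCast_dvd_natCast.mpr (Finset.dvd_prod_of_mem _ (Finset.mem_univ i)))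
  choose e he using hqd
  have heq_e : ∀ i, ((e i : ℚ)) = (q : ℚ) * d i := by
    intro i; rw [he i]; push_cast; ring
  set m₁ : Fin n → ℤ := fun l => ∑ i, e i * v i l with hm₁
  have hm₁R : intToR m₁ = ∑ i, ((e i : ℝ)) • u i := by
    funext l
    simp only [intToR, hm₁, hu, Finset.sum_apply, Pi.smul_apply, smul_eq_mul]
    push_cast
    rfl
  have hepos : ∀ i ∈ J, 0 < (e i : ℝ) := by
    intro i hi
    have h1 : (0 : ℚ) < (e i : ℚ) := by
      rw [heq_e i]; exact mul_pos hqposQ (hdJpos i hi)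
    exact_mod_cast h1
  have hezero : ∀ i, i ∉ J → ((e i : ℝ)) = 0 := by
    intro i hi
    have h1 : ((e i : ℚ)) = 0 := by rw [heq_e i, hdJ0 i hi, mul_zero]
    exact_mod_cast h1
  have hm₁relint : intToR m₁ ∈ intrinsicInterior ℝ (coneOfSub u J) :=
    (mem_relint_iff hli J _).mpr ⟨fun i => (e i : ℝ), hepos, hezero, hm₁R⟩
  have hm₁q : ∀ l, (m₁ l : ℚ) = (q : ℚ) * (m' l : ℚ) - ((q : ℚ) * t) * (m l : ℚ) := by
    intro l
    have h1 : ((m₁ l : ℚ)) = ∑ i, (q : ℚ) * (cq' i - t * cq i) * (v i l : ℚ) := by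
      simp only [hm₁]
      push_cast
      refine Finset.sum_congr rfl fun i _ => ?_
      rw [heq_e i]
    rw [h1, hm'q l, hmq l, Finset.mul_sum, Finset.mul_sum, ← Finset.sum_sub_distrib]
    exact Finset.sum_congr rfl fun i _ => by ring
  have hm₁W : intToC m₁ ∈ W := by
    have heqc : intToC m₁ = ((q : ℚ) : ℂ) • intToC m' - (((q : ℚ) * t : ℚ) : ℂ) • intToC m := by
      funext l
      simp only [intToC, Pi.sub_apply, Pi.smul_apply, smul_eq_mul]
      have h1 := hm₁q l
      have h2 : ((m₁ l : ℂ)) = ((q : ℚ) : ℂ) * ((m' l : ℤ) : ℂ)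
          - (((q : ℚ) * t : ℚ) : ℂ) * ((m l : ℤ) : ℂ) := by
        exact_mod_cast congrArg (fun r : ℚ => (r : ℂ)) h1
      exact h2
    rw [heqc]
    exact Submodule.sub_mem _ (Submodule.smul_mem _ _ hm4) (Submodule.smul_mem _ _ hm2)
  have hfaceJ : subsetW (coneOfSub u J) W := hfaces J hJne_univ ⟨m₁, hm₁relint, hm₁W⟩
  have hvJ : ∀ j ∈ J, toC (u j) ∈ W := by
    intro j hj
    apply hfaceJ
    refine ⟨fun i => if i = j then 1 else 0, ?_, ?_, ?_⟩
    · intro i; by_cases h : i = j <;> simp [h]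
    · intro i hi
      have : i ≠ j := fun h => hi (h ▸ hj)
      simp [this]
    · simp [ite_smul]
  set N : ℕ := ∏ i, (cq i).den with hN
  have hNposQ : (0 : ℚ) < (N : ℚ) := by
    have : 0 < N := Finset.prod_pos fun i _ => (cq i).pos
    exact_mod_cast this
  have hNd : ∀ i, ∃ z : ℤ, (z : ℚ) = ((N : ℤ) : ℚ) * cq i := by
    intro i
    exact den_dvd_int_mul (cq i) (N : ℤ)
      (Int.natCast_dvd_natCast.mpr (Finset.dvd_prod_of_mem _ (Finset.mem_univ i)))
  choose g₀ hg₀ using hNd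
  set g : Fin k → ℤ := fun i => if i ∈ J then 0 else g₀ i with hg
  have hgq : ∀ i, ((g i : ℚ)) = if i ∈ J then 0 else (N : ℚ) * cq i := by
    intro i
    by_cases hiJ : i ∈ J
    · simp [hg, hiJ]
    · simp only [hg, if_neg hiJ]
      rw [hg₀ i]; push_cast; ring
  set m₂ : Fin n → ℤ := fun l => ∑ i, g i * v i l with hm₂
  have hm₂R : intToR m₂ = ∑ i, ((g i : ℝ)) • u i := by
    funext l
    simp only [intToR, hm₂, hu, Finset.sum_apply, Pi.smul_apply, smul_eq_mul]
    push_cast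
    rfl
  have hgpos : ∀ i ∈ Jᶜ, 0 < (g i : ℝ) := by
    intro i hi
    have hiJ : i ∉ J := hi
    have h1 : (0 : ℚ) < ((g i : ℚ)) := by
      rw [hgq i, if_neg hiJ]
      exact mul_pos hNposQ (hcqpos i)
    exact_mod_cast h1
  have hgzero : ∀ i, i ∉ Jᶜ → ((g i : ℝ)) = 0 := by
    intro i hi
    have hiJ : i ∈ J := not_not.mp hi
    have h1 : ((g i : ℚ)) = 0 := by rw [hgq i, if_pos hiJ]
    exact_mod_cast h1
  have hm₂relint : intToR m₂ ∈ intrinsicInterior ℝ (coneOfSub u Jᶜ) :=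
    (mem_relint_iff hli Jᶜ _).mpr ⟨fun i => (g i : ℝ), hgpos, hgzero, hm₂R⟩
  have hJc_ne : Jᶜ ≠ Set.univ := by
    obtain ⟨j, hj⟩ := hJnonempty
    intro h
    have : j ∈ Jᶜ := h ▸ Set.mem_univ j
    exact this hj
  have hm₂q : ∀ l, ((m₂ l : ℚ)) = (N : ℚ) * (m l : ℚ)
      - ∑ i, (if i ∈ J then (N : ℚ) * cq i * (v i l : ℚ) else 0) := by
    intro l
    have hsplit : (N : ℚ) * (m l : ℚ) = ∑ i, (N : ℚ) * cq i * (v i l : ℚ) := by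
      rw [hmq l, Finset.mul_sum]
      exact Finset.sum_congr rfl fun i _ => by ring
    rw [hsplit, ← Finset.sum_sub_distrib]
    have h1 : ((m₂ l : ℚ)) = ∑ i, ((g i : ℚ)) * (v i l : ℚ) := by
      simp only [hm₂]; push_cast; rfl
    rw [h1]
    refine Finset.sum_congr rfl fun i _ => ?_
    rw [hgq i]
    by_cases hiJ : i ∈ J <;> simp [hiJ]
  set χ : Fin k → ℂ := fun i => if i ∈ J then (((N : ℚ) * cq i : ℚ) : ℂ) else 0 with hχ
  have hm₂W : intToC m₂ ∈ W := by
    have heqc : intToC m₂ = ((N : ℚ) : ℂ) • intToC m - ∑ i, χ i • toC (u i) := by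
      funext l
      simp only [intToC, Pi.sub_apply, Pi.smul_apply, smul_eq_mul, Finset.sum_apply, hχ, hu,
        toC, intToR, ite_mul, zero_mul]
      have h2 : ((m₂ l : ℂ)) = ((N : ℚ) : ℂ) * ((m l : ℤ) : ℂ)
          - ∑ i, (if i ∈ J then (((N : ℚ) * cq i : ℚ) : ℂ) * ((v i l : ℤ) : ℂ) else 0) := by
        have h1 := hm₂q l
        have h3 := congrArg (fun r : ℚ => (r : ℂ)) h1
        push_cast [apply_ite (fun r : ℚ => (r : ℂ))] at h3 ⊢
        convert h3 using 2
      rw [h2]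
      norm_cast
    rw [heqc]
    refine Submodule.sub_mem _ (Submodule.smul_mem _ _ hm2) (Submodule.sum_mem _ fun i _ => ?_)
    by_cases hiJ : i ∈ J
    · exact Submodule.smul_mem _ _ (hvJ i hiJ)
    · have hz : χ i = 0 := by simp [hχ, hiJ]
      rw [hz, zero_smul]
      exact Submodule.zero_mem _
  have hfaceJc : subsetW (coneOfSub u Jᶜ) W := hfaces Jᶜ hJc_ne ⟨m₂, hm₂relint, hm₂W⟩
  have hvJc : ∀ j, j ∉ J → toC (u j) ∈ W := by
    intro j hj
    apply hfaceJc
    refine ⟨fun i => if i = j then 1 else 0, ?_, ?_, ?_⟩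
    · intro i; by_cases h : i = j <;> simp [h]
    · intro i hi
      have hiJ : i ∈ J := not_not.mp hi
      have : i ≠ j := fun h => hj (h ▸ hiJ)
      simp [this]
    · simp [ite_smul]
  intro x hx
  obtain ⟨a, ha0, hax⟩ := hx
  have hxc : toC x = ∑ i, ((a i : ℂ)) • toC (u i) := by rw [hax]; exact toC_sum a u
  rw [hxc]
  exact Submodule.sum_mem _ fun i _ => Submodule.smul_mem _ _
    (by by_cases h : i ∈ J; exacts [hvJ i h, hvJc i h])
end
end

section
/- Fix n ∈ ℕ. Let v₁, …, v_s ∈ ℤⁿ be ℝ-linearly independent, let W ⊆ ℂⁿ be a complex vector subspace, and let S ⊊ {1, …, s} be a proper subset such that vᵢ ∈ W for every i ∈ S. If Relint(Cone(v₁, …, v_s)) ∩ W ∩ ℤⁿ ≠ ∅, then Relint(Cone(vⱼ : j ∉ S)) ∩ W ∩ ℤⁿ ≠ ∅. -/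
open scoped BigOperators

noncomputable section

section AuxCone

variable {n : ℕ} {ι : Type*} [Fintype ι]


/-- General finitely generated cone over an arbitrary finite index type. -/
def genCone (v : ι → (Fin n → ℝ)) : Set (Fin n → ℝ) :=
  {x | ∃ c : ι → ℝ, (∀ i, 0 ≤ c i) ∧ x = ∑ i, c i • v i}

lemma genCone_subset_span (v : ι → (Fin n → ℝ)) :
    genCone v ⊆ (Submodule.span ℝ (Set.range v) : Set (Fin n → ℝ)) := by
  rintro x ⟨c, -, rfl⟩
  exact Submodule.sum_mem _ fun i _ =>
    Submodule.smul_mem _ _ (Submodule.subset_span ⟨i, rfl⟩)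

lemma zero_mem_genCone (v : ι → (Fin n → ℝ)) : (0 : Fin n → ℝ) ∈ genCone v :=
  ⟨0, fun _ => le_rfl, by simp⟩

lemma mem_genCone_self (v : ι → (Fin n → ℝ)) (i : ι) : v i ∈ genCone v := by
  classical
  refine ⟨fun j => if j = i then 1 else 0, fun j => by by_cases h : j = i <;> simp [h], ?_⟩
  simp [ite_smul]

lemma affineSpan_genCone (v : ι → (Fin n → ℝ)) :
    (affineSpan ℝ (genCone v) : Set (Fin n → ℝ)) =
      (Submodule.span ℝ (Set.range v) : Set (Fin n → ℝ)) := by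
  have h0 : genCone v = insert 0 (genCone v) := (Set.insert_eq_self.2 (zero_mem_genCone v)).symm
  rw [h0, affineSpan_insert_zero]
  refine le_antisymm (Submodule.span_le.2 (genCone_subset_span v)) (Submodule.span_le.2 ?_)
  rintro x ⟨i, rfl⟩
  exact Submodule.subset_span (mem_genCone_self v i)

lemma mem_intrinsicInterior_genCone_iff (v : ι → (Fin n → ℝ)) (x : Fin n → ℝ) :
    x ∈ intrinsicInterior ℝ (genCone v) ↔
      x ∈ genCone v ∧ ∃ U ∈ nhds x,
        ∀ z ∈ Submodule.span ℝ (Set.range v), z ∈ U → z ∈ genCone v := by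
  constructor
  · intro hx
    refine ⟨intrinsicInterior_subset hx, ?_⟩
    obtain ⟨y, hy, rfl⟩ := mem_intrinsicInterior.1 hx
    rw [mem_interior_iff_mem_nhds, nhds_induced, Filter.mem_comap] at hy
    obtain ⟨U, hU, hsub⟩ := hy
    refine ⟨U, hU, fun z hz hzU => ?_⟩
    have hzA : z ∈ affineSpan ℝ (genCone v) := by
      rw [← SetLike.mem_coe, affineSpan_genCone]; exact hz
    exact hsub (show (⟨z, hzA⟩ : affineSpan ℝ (genCone v)) ∈ _ from hzU)
  · rintro ⟨hxσ, U, hU, hsub⟩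
    have hxA : x ∈ affineSpan ℝ (genCone v) := subset_affineSpan ℝ _ hxσ
    refine mem_intrinsicInterior.2 ⟨⟨x, hxA⟩, ?_, rfl⟩
    rw [mem_interior_iff_mem_nhds, nhds_induced, Filter.mem_comap]
    refine ⟨U, hU, ?_⟩
    rintro ⟨z, hzA⟩ hzU
    have hz : z ∈ Submodule.span ℝ (Set.range v) := by
      rw [← SetLike.mem_coe, ← affineSpan_genCone]; exact hzA
    exact hsub z hz hzU


lemma pos_mem_intrinsicInterior_genCone {v : ι → (Fin n → ℝ)}
    (hli : LinearIndependent ℝ v) (c : ι → ℝ) (hc : ∀ i, 0 < c i) :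
    (∑ i, c i • v i) ∈ intrinsicInterior ℝ (genCone v) := by
  classical
  rw [mem_intrinsicInterior_genCone_iff]
  refine ⟨⟨c, fun i => (hc i).le, rfl⟩, ?_⟩
  set V := Submodule.span ℝ (Set.range v) with hV
  let b : Module.Basis ι ℝ V := Module.Basis.span hli
  have hcoe : ∀ d : ι → ℝ, ((b.equivFun.symm d : V) : Fin n → ℝ) = ∑ i, d i • v i := by
    intro d
    rw [Module.Basis.equivFun_symm_apply]
    push_cast
    exact Finset.sum_congr rfl fun i _ => by rw [Module.Basis.span_apply]
  have hcont : Continuous fun z : V => b.equivFun z :=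
    LinearMap.continuous_of_finiteDimensional (b.equivFun : V →ₗ[ℝ] (ι → ℝ))
  have hopen : IsOpen {z : V | ∀ i, 0 < b.equivFun z i} := by
    have : {z : V | ∀ i, 0 < b.equivFun z i} =
        ⋂ i, (fun z : V => b.equivFun z i) ⁻¹' Set.Ioi 0 := by
      ext z; simp
    rw [this]
    exact isOpen_iInter_of_finite fun i =>
      (isOpen_Ioi).preimage ((continuous_apply i).comp hcont)
  obtain ⟨U, hUopen, hUeq⟩ := isOpen_induced_iff.1 hopen
  set xV : V := b.equivFun.symm c with hxV
  have hxcoe : (xV : Fin n → ℝ) = ∑ i, c i • v i := hcoe c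
  have hxmem : xV ∈ {z : V | ∀ i, 0 < b.equivFun z i} := by
    simp only [Set.mem_setOf_eq, hxV, LinearEquiv.apply_symm_apply]
    exact hc
  have hxU : (∑ i, c i • v i) ∈ U := by
    rw [← hxcoe]
    have := hUeq ▸ hxmem
    exact this
  refine ⟨U, hUopen.mem_nhds hxU, fun z hz hzU => ?_⟩
  set zV : V := ⟨z, hz⟩ with hzV
  have hzmem : zV ∈ {z : V | ∀ i, 0 < b.equivFun z i} := by
    rw [← hUeq]; exact hzU
  refine ⟨fun i => b.equivFun zV i, fun i => (hzmem i).le, ?_⟩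
  have := hcoe (b.equivFun zV)
  rw [LinearEquiv.symm_apply_apply] at this
  exact this

lemma exists_pos_of_mem_intrinsicInterior_genCone {v : ι → (Fin n → ℝ)}
    (hli : LinearIndependent ℝ v) {x : Fin n → ℝ}
    (hx : x ∈ intrinsicInterior ℝ (genCone v)) :
    ∃ c : ι → ℝ, (∀ i, 0 < c i) ∧ x = ∑ i, c i • v i := by
  classical
  rw [mem_intrinsicInterior_genCone_iff] at hx
  obtain ⟨⟨c, hc, rfl⟩, U, hU, hsub⟩ := hx
  refine ⟨c, fun i₀ => ?_, rfl⟩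
  rcases (hc i₀).lt_or_eq with h | h
  · exact h
  exfalso
  -- points x - t • v i₀ for small t > 0
  have hcont : Filter.Tendsto (fun t : ℝ => (∑ i, c i • v i) - t • v i₀)
      (nhdsWithin 0 (Set.Ioi 0)) (nhds (∑ i, c i • v i)) := by
    have : Continuous fun t : ℝ => (∑ i, c i • v i) - t • v i₀ := by continuity
    have h0 := this.tendsto 0
    simp only [zero_smul, sub_zero] at h0
    exact h0.mono_left nhdsWithin_le_nhds
  have hev : ∀ᶠ t : ℝ in nhdsWithin (0:ℝ) (Set.Ioi 0),
      ((∑ i, c i • v i) - t • v i₀) ∈ U := hcont hU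
  have hpos : ∀ᶠ t : ℝ in nhdsWithin (0:ℝ) (Set.Ioi 0), t ∈ Set.Ioi 0 :=
    self_mem_nhdsWithin
  obtain ⟨t, htU, ht0⟩ := (hev.and hpos).exists
  have hxV : (∑ i, c i • v i) ∈ Submodule.span ℝ (Set.range v) :=
    genCone_subset_span v ⟨c, hc, rfl⟩
  have hzV : ((∑ i, c i • v i) - t • v i₀) ∈ Submodule.span ℝ (Set.range v) :=
    Submodule.sub_mem _ hxV (Submodule.smul_mem _ _ (Submodule.subset_span ⟨i₀, rfl⟩))
  obtain ⟨c', hc', hz⟩ := hsub _ hzV htU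
  have hzero : ∑ i, (c' i - (c i - if i = i₀ then t else 0)) • v i = 0 := by
    simp only [sub_smul, ite_smul, zero_smul, Finset.sum_sub_distrib,
      Finset.sum_ite_eq', Finset.mem_univ, if_true]
    rw [← hz]
    abel
  have h1 := Fintype.linearIndependent_iff.1 hli _ hzero i₀
  rw [if_pos rfl, ← h] at h1
  have h2 := hc' i₀
  have h3 : (0:ℝ) < t := ht0
  linarith


variable [DecidableEq ι]

lemma exists_rat_coeff (v : ι → Fin n → ℤ)
    (hli : LinearIndependent ℝ fun i => (fun k => (v i k : ℝ) : Fin n → ℝ))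
    (m : Fin n → ℤ) (c : ι → ℝ)
    (h : (fun k => (m k : ℝ)) = ∑ i, c i • (fun k => (v i k : ℝ) : Fin n → ℝ)) :
    ∀ i, ∃ q : ℚ, c i = (q : ℝ) := by
  set G : Matrix ι ι ℚ := Matrix.of fun i j => ∑ k, (v i k : ℚ) * (v j k : ℚ) with hG
  set Gr : Matrix ι ι ℝ := G.map ((↑) : ℚ → ℝ) with hGr
  have hGrij : ∀ i j, Gr i j = ∑ k, (v i k : ℝ) * (v j k : ℝ) := by
    intro i j
    simp [hGr, hG, Matrix.map_apply]
  have hmul : ∀ w : ι → ℝ, ∀ i, Gr.mulVec w i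
      = ∑ k, (v i k : ℝ) * (∑ j, w j * (v j k : ℝ)) := by
    intro w i
    simp only [Matrix.mulVec, dotProduct, hGrij]
    simp only [Finset.sum_mul, Finset.mul_sum]
    rw [Finset.sum_comm]
    exact Finset.sum_congr rfl fun k _ => Finset.sum_congr rfl fun j _ => by ring
  have hinj : ∀ w : ι → ℝ, Gr.mulVec w = 0 → w = 0 := by
    intro w hw
    have hcalc : ∑ i, w i * Gr.mulVec w i = ∑ k, (∑ j, w j * (v j k : ℝ))^2 := by
      calc ∑ i, w i * Gr.mulVec w i
          = ∑ i, ∑ k, (w i * (v i k : ℝ)) * (∑ j, w j * (v j k : ℝ)) := by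
            simp only [hmul, Finset.mul_sum]
            exact Finset.sum_congr rfl fun i _ => Finset.sum_congr rfl fun k _ => by
              simp [mul_assoc]
        _ = ∑ k, (∑ j, w j * (v j k : ℝ))^2 := by
            rw [Finset.sum_comm]
            refine Finset.sum_congr rfl fun k _ => ?_
            rw [pow_two, ← Finset.sum_mul]
    have h0 : ∑ k, (∑ j, w j * (v j k : ℝ))^2 = 0 := by
      rw [← hcalc, hw]; simp
    have hk0 : ∀ k : Fin n, (∑ j, w j * (v j k : ℝ)) = 0 := by
      intro k
      have h5 := (Finset.sum_eq_zero_iff_of_nonneg (fun k _ => sq_nonneg _)).1 h0 k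
        (Finset.mem_univ k)
      exact (pow_eq_zero_iff two_ne_zero).1 h5
    have hzero : ∑ j, w j • (fun k => (v j k : ℝ) : Fin n → ℝ) = 0 := by
      funext k
      rw [Finset.sum_apply]
      simpa using hk0 k
    funext i
    exact Fintype.linearIndependent_iff.1 hli w hzero i
  have hdetR : Gr.det ≠ 0 := by
    intro hd
    obtain ⟨w, hw0, hww⟩ := (Matrix.exists_mulVec_eq_zero_iff).2 hd
    exact hw0 (hinj w hww)
  have hdetQ : G.det ≠ 0 := by
    intro hd
    apply hdetR
    have h6 := RingHom.map_det (Rat.castHom ℝ) G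
    simp only [RingHom.mapMatrix_apply, Rat.coe_castHom] at h6
    rw [hGr, ← h6, hd]
    simp
  set d : ι → ℚ := fun i => ∑ k, (v i k : ℚ) * (m k : ℚ) with hd
  have hkc : ∀ k, ((m k : ℝ)) = ∑ j, c j * (v j k : ℝ) := by
    intro k
    have := congrFun h k
    simpa [Finset.sum_apply] using this
  have hGc : Gr.mulVec c = fun i => ((d i : ℚ) : ℝ) := by
    funext i
    rw [hmul]
    simp only [hd]
    push_cast
    exact Finset.sum_congr rfl fun k _ => by rw [← hkc k]
  have hGdet : IsUnit G.det := isUnit_iff_ne_zero.2 hdetQ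
  set q : ι → ℚ := G⁻¹.mulVec d with hq
  have hGq : G.mulVec q = d := by
    rw [hq, Matrix.mulVec_mulVec, Matrix.mul_nonsing_inv _ hGdet, Matrix.one_mulVec]
  have hGqr : Gr.mulVec (fun i => (q i : ℝ)) = fun i => ((d i : ℚ) : ℝ) := by
    funext i
    have h2 := RingHom.map_mulVec (Rat.castHom ℝ) G q i
    rw [hGq] at h2
    rw [hGr]
    simp only [Rat.coe_castHom] at h2
    exact h2.symm
  have hc : c = fun i => (q i : ℝ) := by
    have hsub : Gr.mulVec (c - fun i => (q i : ℝ)) = 0 := by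
      rw [Matrix.mulVec_sub, hGc, hGqr]; simp
    have h3 := hinj _ hsub
    funext i
    have h4 := congrFun h3 i
    simp only [Pi.sub_apply, Pi.zero_apply, sub_eq_zero] at h4
    exact h4
  intro i; exact ⟨q i, congrFun hc i⟩

/-- Summing over a subtype versus summing with coefficients vanishing off the set. -/
lemma sum_subtype_eq {M : Type*} [AddCommMonoid M] {s : ℕ} (J : Set (Fin s))
    [Fintype ↥J] (f : Fin s → M) (hf : ∀ i ∉ J, f i = 0) :
    ∑ i : ↥J, f i = ∑ i, f i := by
  classical
  rw [← Finset.sum_subtype (Finset.univ.filter (· ∈ J)) (by simp) f]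
  rw [Finset.sum_filter]
  refine (Finset.sum_congr rfl fun i _ => ?_).symm
  by_cases h : i ∈ J <;> simp [h, hf i]

lemma coneOfSub_eq_genCone {s : ℕ} (w : Fin s → Fin n → ℝ) (J : Set (Fin s)) [Fintype ↥J] :
    coneOfSub w J = genCone (fun i : ↥J => w i) := by
  classical
  ext x
  constructor
  · rintro ⟨c, h0, hz, rfl⟩
    exact ⟨fun i => c i, fun i => h0 i,
      (sum_subtype_eq J (fun i => c i • w i) (fun i hi => by simp [hz i hi])).symm⟩
  · rintro ⟨c, h0, rfl⟩
    refine ⟨fun i => if h : i ∈ J then c ⟨i, h⟩ else 0, fun i => ?_, fun i hi => dif_neg hi, ?_⟩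
    · by_cases h : i ∈ J <;> simp [h, h0]
    · rw [← sum_subtype_eq J (fun i => (if h : i ∈ J then c ⟨i, h⟩ else 0) • w i)
        (fun i hi => by simp [hi])]
      exact Finset.sum_congr rfl fun i _ => by rw [dif_pos i.2]


end AuxCone

/-- Subtraction lemma: a lattice point of `W` in the relative interior of a simplicial
rational cone yields, after removing generators lying in `W`, a lattice point of `W` in
the relative interior of the complementary face. -/
theorem relintMeetsLattice_compl_of_relintMeetsLattice (n s : ℕ) (v : Fin s → Fin n → ℤ)
    (hli : LinearIndependent ℝ fun i => intToR (v i))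
    (W : Submodule ℂ (Fin n → ℂ))
    (S : Set (Fin s)) (hS : S ≠ Set.univ)
    (hSW : ∀ i ∈ S, intToC (v i) ∈ W)
    (hmeet : relintMeetsLattice (coneOf fun i => intToR (v i)) W) :
    relintMeetsLattice (coneOfSub (fun i => intToR (v i)) Sᶜ) W := by
  classical
  obtain ⟨m, hmI, hmW⟩ := hmeet
  have hcone : coneOf (fun i => intToR (v i)) = genCone (fun i => intToR (v i)) := rfl
  rw [hcone] at hmI
  obtain ⟨c, hcpos, hcm⟩ := exists_pos_of_mem_intrinsicInterior_genCone hli hmI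
  have hrat := exists_rat_coeff v hli m c hcm
  choose q hqc using hrat
  set N : ℤ := ∏ i, ((q i).den : ℤ) with hN
  have hNpos : 0 < N := Finset.prod_pos fun i _ => by exact_mod_cast (q i).den_pos
  have hdint : ∀ i, ∃ z : ℤ, ((z : ℚ)) = (N : ℚ) * q i := by
    intro i
    obtain ⟨t, ht⟩ : ((q i).den : ℤ) ∣ N := Finset.dvd_prod_of_mem _ (Finset.mem_univ i)
    refine ⟨t * (q i).num, ?_⟩
    have hNq : (N : ℚ) = ((q i).den : ℚ) * (t : ℚ) := by exact_mod_cast ht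
    rw [hNq]
    push_cast
    rw [mul_comm ((q i).den : ℚ) (t : ℚ), mul_assoc, mul_comm ((q i).den : ℚ) (q i),
      Rat.mul_den_eq_num]
  choose dz hdz using hdint
  have hdzR : ∀ i, ((dz i : ℝ)) = (N : ℝ) * c i := by
    intro i
    have h7 : ((dz i : ℚ) : ℝ) = (((N : ℚ) * q i : ℚ) : ℝ) := by rw [hdz i]
    push_cast at h7
    rw [hqc i]
    exact h7
  have hmk : ∀ k, (m k : ℝ) = ∑ i, c i * (v i k : ℝ) := by
    intro k
    have := congrFun hcm k
    simpa [intToR, Finset.sum_apply] using this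
  have hkey : ∀ k, N * m k = ∑ i, dz i * v i k := by
    intro k
    have hR : ((N * m k : ℤ) : ℝ) = ((∑ i, dz i * v i k : ℤ) : ℝ) := by
      push_cast
      rw [hmk k, Finset.mul_sum]
      exact Finset.sum_congr rfl fun i _ => by rw [hdzR i]; ring
    exact_mod_cast hR
  set m' : Fin n → ℤ := fun k => ∑ i, (if i ∈ S then 0 else dz i) * v i k with hm'
  have hsplit : ∀ k, m' k = N * m k - ∑ i, (if i ∈ S then dz i else 0) * v i k := by
    intro k
    rw [hkey k, ← Finset.sum_sub_distrib]
    exact Finset.sum_congr rfl fun i _ => by by_cases h : i ∈ S <;> simp [h]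
  refine ⟨m', ?_, ?_⟩
  · -- real side
    rw [coneOfSub_eq_genCone]
    have hlisub : LinearIndependent ℝ (fun i : ↥(Sᶜ) => intToR (v ↑i)) :=
      hli.comp Subtype.val Subtype.val_injective
    set f : Fin s → (Fin n → ℝ) := fun i => (if i ∈ S then 0 else (N : ℝ) * c i) • intToR (v i)
      with hf
    have hf0 : ∀ i ∉ Sᶜ, f i = 0 := by
      intro i hi
      simp only [Set.mem_compl_iff, not_not] at hi
      simp [hf, hi]
    have h8 : ∑ i : ↥(Sᶜ), f ↑i = ∑ i, f i := sum_subtype_eq Sᶜ f hf0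
    have h9 : ∑ i, f i = intToR m' := by
      funext k
      rw [Finset.sum_apply]
      simp only [hf, Pi.smul_apply, smul_eq_mul, intToR, hm']
      push_cast
      refine Finset.sum_congr rfl fun i _ => ?_
      by_cases h : i ∈ S
      · simp [h]
      · simp only [h, if_false]
        rw [hdzR i]
    have h10 : intToR m' = ∑ i : ↥(Sᶜ), ((N : ℝ) * c ↑i) • (fun j : ↥(Sᶜ) => intToR (v ↑j)) i := by
      rw [← h9, ← h8]
      refine Finset.sum_congr rfl fun i _ => ?_
      have hiS : (↑i : Fin s) ∉ S := i.2
      simp [hf, hiS]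
    rw [h10]
    exact pos_mem_intrinsicInterior_genCone hlisub _
      (fun i => mul_pos (by exact_mod_cast hNpos) (hcpos ↑i))
  · -- complex side
    have hCeq : intToC m' = (N : ℂ) • intToC m
        - ∑ i, (((if i ∈ S then dz i else 0 : ℤ)) : ℂ) • intToC (v i) := by
      funext k
      simp only [intToC, Pi.smul_apply, Pi.sub_apply, Finset.sum_apply, smul_eq_mul, hsplit k]
      push_cast
      ring_nf
    rw [hCeq]
    refine Submodule.sub_mem _ (Submodule.smul_mem _ _ hmW) (Submodule.sum_mem _ fun i _ => ?_)
    by_cases h : i ∈ S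
    · exact Submodule.smul_mem _ _ (hSW i h)
    · simp [h]
end
end

section
/- Fix n ∈ ℕ with m ≥ 2 vectors v₁, …, v_m ∈ ℤⁿ, and let a₁, …, a_m be strictly positive rational numbers with ∑ᵢ aᵢ·vᵢ = 0. Let W ⊆ ℂⁿ be a complex vector subspace and suppose v_ℓ ∈ W for some index ℓ. Assume the cone σ^ℓ := Cone(vᵢ : i ≠ ℓ) satisfies the implication [Relint(σ^ℓ) ∩ W ∩ ℤⁿ ≠ ∅ ⟹ σ^ℓ ⊆ W]. Then vᵢ ∈ W for every i ∈ {1, …, m}; in particular Cone(v₁, …, v_m) ⊆ W. -/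
open scoped BigOperators

noncomputable section

theorem aux_mem_relint {n m : ℕ} (hm : 2 ≤ m) (u : Fin m → (Fin n → ℝ)) (ℓ : Fin m)
    (c : Fin m → ℝ) (hc : ∀ i, i ≠ ℓ → 0 < c i) (hcℓ : c ℓ = 0) :
    (∑ i, c i • u i) ∈ intrinsicInterior ℝ (coneOfSub u {ℓ}ᶜ) := by
  classical
  set σ := coneOfSub u {ℓ}ᶜ with hσ
  set x := ∑ i, c i • u i with hx
  have hxσ : x ∈ σ := ⟨c, fun i => by
      rcases eq_or_ne i ℓ with h | h
      · simp [h, hcℓ]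
      · exact (hc i h).le,
    fun i hi => by
      simp only [Set.notMem_compl_iff, Set.mem_singleton_iff] at hi
      simp [hi, hcℓ], rfl⟩
  -- the linear-combination map
  set T : (Fin m → ℝ) →ₗ[ℝ] (Fin n → ℝ) :=
    ∑ i, (LinearMap.proj i).smulRight (u i) with hT
  have hTapp : ∀ d : Fin m → ℝ, T d = ∑ i, d i • u i := by
    intro d; simp [hT, LinearMap.sum_apply]
  -- kill the ℓ coordinate
  set P : (Fin m → ℝ) →ₗ[ℝ] (Fin m → ℝ) :=
    { toFun := fun d => fun i => if i = ℓ then 0 else d i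
      map_add' := by intro d e; funext i; by_cases h : i = ℓ <;> simp [h]
      map_smul' := by intro r d; funext i; by_cases h : i = ℓ <;> simp [h] } with hP
  set V : Submodule ℝ (Fin n → ℝ) := Submodule.span ℝ (u '' {i | i ≠ ℓ}) with hV
  have hT0mem : ∀ d, T (P d) ∈ V := by
    intro d
    rw [hTapp]
    refine Submodule.sum_mem _ fun i _ => ?_
    by_cases h : i = ℓ
    · simp [hP, h]
    · exact Submodule.smul_mem _ _ (Submodule.subset_span ⟨i, h, rfl⟩)
  set T₁ : (Fin m → ℝ) →ₗ[ℝ] V := (T ∘ₗ P).codRestrict V hT0mem with hT₁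
  have hsurj : Function.Surjective T₁ := by
    rintro ⟨w, hw⟩
    have hle : V ≤ LinearMap.range (T ∘ₗ P) := by
      rw [hV, Submodule.span_le]
      rintro _ ⟨i, hi, rfl⟩
      simp only [Set.mem_setOf_eq] at hi
      refine ⟨Pi.single i 1, ?_⟩
      rw [LinearMap.comp_apply, hTapp]
      rw [Finset.sum_eq_single i]
      · simp [hP, hi]
      · intro j _ hj
        by_cases h : j = ℓ <;> simp [hP, h, Pi.single_apply, hj]
      · simp
    obtain ⟨d, hd⟩ := hle hw
    exact ⟨d, Subtype.ext hd⟩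
  obtain ⟨S, hS⟩ := T₁.exists_rightInverse_of_surjective (LinearMap.range_eq_top.mpr hsurj)
  set Scl : ↥V →L[ℝ] (Fin m → ℝ) := LinearMap.toContinuousLinearMap S with hScl
  set C : ℝ := ‖Scl‖ with hC
  have hC0 : 0 ≤ C := by positivity
  -- minimum of the positive coefficients
  have hne : (Finset.univ.erase ℓ).Nonempty := by
    obtain ⟨j, hj⟩ := Fintype.exists_ne_of_one_lt_card (by rw [Fintype.card_fin]; omega : 1 < Fintype.card (Fin m)) ℓ
    exact ⟨j, Finset.mem_erase.mpr ⟨hj, Finset.mem_univ j⟩⟩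
  set δ : ℝ := (Finset.univ.erase ℓ).inf' hne c with hδ
  have hδpos : 0 < δ := by
    rw [hδ, Finset.lt_inf'_iff]
    intro i hi
    exact hc i (Finset.mem_erase.mp hi).1
  have hδle : ∀ i, i ≠ ℓ → δ ≤ c i := fun i hi =>
    Finset.inf'_le _ (Finset.mem_erase.mpr ⟨hi, Finset.mem_univ i⟩)
  set ε : ℝ := δ / (C + 1) with hε
  have hεpos : 0 < ε := div_pos hδpos (by linarith)
  have hCε : C * ε < δ := by
    rw [hε]
    calc C * (δ / (C + 1)) = δ * (C / (C + 1)) := by ring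
    _ < δ * 1 := by
        refine mul_lt_mul_of_pos_left ?_ hδpos
        rw [div_lt_one (by linarith)]; linarith
    _ = δ := mul_one δ
  have hxV : x ∈ V := by
    have hpc : P c = c := by
      funext i; by_cases h : i = ℓ <;> simp [hP, h, hcℓ]
    have h2 := hT0mem c
    rw [hpc, hTapp] at h2
    rwa [hx]
  have hσV : σ ⊆ (V : Set (Fin n → ℝ)) := by
    rintro z ⟨d, _, hd0, rfl⟩
    have hpd : P d = d := by
      funext i
      by_cases h : i = ℓ
      · simp [hP, h, hd0 ℓ (by simp)]
      · simp [hP, h]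
    have h2 := hT0mem d
    rwa [hpd, hTapp] at h2
  -- the key inclusion: the ball around x inside V is contained in σ
  have hball : ∀ y : Fin n → ℝ, y ∈ Metric.ball x ε → y ∈ (V : Set (Fin n → ℝ)) → y ∈ σ := by
    intro y hy hyV
    have hwV : y - x ∈ V := V.sub_mem hyV hxV
    set w : ↥V := ⟨y - x, hwV⟩ with hw
    have hwn : ‖w‖ < ε := by
      have : dist y x < ε := Metric.mem_ball.mp hy
      rwa [dist_eq_norm] at this
    set sw : Fin m → ℝ := S w with hsw
    have hTsw : T (P sw) = y - x := by
      have h1 : T₁ (S w) = w := by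
        simpa using LinearMap.congr_fun hS w
      have h2 := congrArg Subtype.val h1
      simpa [hT₁, LinearMap.codRestrict] using h2
    have hswn : ∀ i, |sw i| ≤ C * ε := by
      intro i
      calc |sw i| ≤ ‖sw‖ := by
            simpa using norm_le_pi_norm sw i
      _ = ‖Scl w‖ := by rw [hsw]; rfl
      _ ≤ C * ‖w‖ := Scl.le_opNorm w
      _ ≤ C * ε := mul_le_mul_of_nonneg_left hwn.le hC0
    refine ⟨fun i => c i + P sw i, fun i => ?_, fun i hi => ?_, ?_⟩
    · by_cases h : i = ℓ
      · simp [h, hcℓ, hP]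
      · have h1 : P sw i = sw i := by simp [hP, h]
        have h2 := (abs_le.mp (hswn i)).1
        have := hδle i h
        show 0 ≤ c i + P sw i
        rw [h1]
        linarith [hCε]
    · simp only [Set.notMem_compl_iff, Set.mem_singleton_iff] at hi
      simp [hi, hcℓ, hP]
    · have : ∑ i, (c i + P sw i) • u i = (∑ i, c i • u i) + ∑ i, P sw i • u i := by
        rw [← Finset.sum_add_distrib]
        congr 1; funext i; rw [add_smul]
      rw [this, ← hTapp (P sw), hTsw, ← hx]
      abel
  -- assemble membership in the intrinsic interior
  rw [mem_intrinsicInterior]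
  refine ⟨⟨x, subset_affineSpan ℝ σ hxσ⟩, ?_, rfl⟩
  rw [mem_interior]
  refine ⟨(Subtype.val : affineSpan ℝ σ → (Fin n → ℝ)) ⁻¹' Metric.ball x ε, ?_, ?_, ?_⟩
  · rintro ⟨q, hq⟩ hq2
    have hqV : q ∈ (V : Set (Fin n → ℝ)) := by
      have h1 : affineSpan ℝ σ ≤ V.toAffineSubspace := by
        refine le_trans (affineSpan_mono ℝ hσV) ?_
        have h2 := affineSpan_le_toAffineSubspace_span (k := ℝ) (s := (V : Set (Fin n → ℝ)))
        rwa [Submodule.span_eq] at h2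
      exact (Submodule.mem_toAffineSubspace).mp (h1 hq)
    exact hball q hq2 hqV
  · exact IsOpen.preimage continuous_subtype_val Metric.isOpen_ball
  · show x ∈ Metric.ball x ε
    exact Metric.mem_ball_self hεpos

/-- Fiber type contraction: given `m ≥ 2` lattice vectors with a positive rational linear
relation `∑ aᵢ vᵢ = 0`, if some `v_ℓ ∈ W` and the opposite cone `σ^ℓ` satisfies the (†)
implication for `W`, then all `vᵢ` lie in `W`; in particular `Cone(v₁,…,v_m) ⊆ W`. -/
theorem all_mem_of_pos_relation (n m : ℕ) (hm : 2 ≤ m) (v : Fin m → Fin n → ℤ)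
    (a : Fin m → ℚ) (ha : ∀ i, 0 < a i)
    (hsum : ∑ i, (a i : ℝ) • intToR (v i) = 0)
    (W : Submodule ℂ (Fin n → ℂ)) (ℓ : Fin m) (hℓ : intToC (v ℓ) ∈ W)
    (hface : relintMeetsLattice (coneOfSub (fun i => intToR (v i)) {ℓ}ᶜ) W →
      subsetW (coneOfSub (fun i => intToR (v i)) {ℓ}ᶜ) W) :
    (∀ i, intToC (v i) ∈ W) ∧ subsetW (coneOf fun i => intToR (v i)) W := by
  classical
  set u : Fin m → (Fin n → ℝ) := fun i => intToR (v i) with hu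
  set σ := coneOfSub u {ℓ}ᶜ with hσ
  -- the positive coefficients for the lattice point
  set D : ℕ := (a ℓ).den with hD
  set b : ℤ := (a ℓ).num with hb
  have hbD : (D : ℝ) * ((a ℓ : ℚ) : ℝ) = (b : ℝ) := by
    have h : ((D : ℚ) * a ℓ = (b : ℚ)) := by
      rw [mul_comm]; exact_mod_cast Rat.mul_den_eq_num (a ℓ)
    exact_mod_cast congrArg (fun r : ℚ => (r : ℝ)) h
  set c : Fin m → ℝ := fun i => if i = ℓ then 0 else (D : ℝ) * ((a i : ℚ) : ℝ) with hc
  have hcpos : ∀ i, i ≠ ℓ → 0 < c i := by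
    intro i hi
    have h1 : (0:ℝ) < (D:ℝ) := by
      exact_mod_cast Nat.pos_of_ne_zero (a ℓ).den_nz
    have h2 : (0:ℝ) < ((a i : ℚ) : ℝ) := by exact_mod_cast ha i
    simp only [hc, if_neg hi]
    positivity
  have hcℓ : c ℓ = 0 := by simp [hc]
  -- the lattice point
  set m₀ : Fin n → ℤ := fun j => -b * v ℓ j with hm₀
  have hxeq : ∑ i, c i • u i = intToR m₀ := by
    have h1 : ∑ i, ((D : ℝ) * ((a i : ℚ) : ℝ)) • u i = 0 := by
      have : ∀ i ∈ Finset.univ, ((D : ℝ) * ((a i : ℚ) : ℝ)) • u i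
          = (D : ℝ) • (((a i : ℚ) : ℝ) • u i) := fun i _ => by rw [mul_smul]
      rw [Finset.sum_congr rfl this, ← Finset.smul_sum, hsum, smul_zero]
    have h2 : ∀ i ∈ Finset.univ, c i • u i
        = ((D : ℝ) * ((a i : ℚ) : ℝ)) • u i
          - (if i = ℓ then ((D : ℝ) * ((a ℓ : ℚ) : ℝ)) • u ℓ else 0) := by
      intro i _
      by_cases h : i = ℓ
      · subst h; simp [hc]
      · simp [hc, h]
    rw [Finset.sum_congr rfl h2, Finset.sum_sub_distrib, h1, Finset.sum_ite_eq'
      Finset.univ ℓ (fun _ => ((D : ℝ) * ((a ℓ : ℚ) : ℝ)) • u ℓ)]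
    simp only [Finset.mem_univ, if_true, zero_sub]
    funext j
    simp only [hbD, Pi.neg_apply, Pi.smul_apply, smul_eq_mul, intToR, hm₀, hu]
    push_cast
    ring
  -- the lattice point lies in W
  have hm₀W : intToC m₀ ∈ W := by
    have : intToC m₀ = ((-b : ℤ) : ℂ) • intToC (v ℓ) := by
      funext j
      simp only [intToC, hm₀, Pi.smul_apply, smul_eq_mul]
      push_cast
      ring
    rw [this]
    exact W.smul_mem _ hℓ
  -- relint meets the lattice
  have hrm : relintMeetsLattice σ W := by
    refine ⟨m₀, ?_, hm₀W⟩
    rw [← hxeq]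
    exact aux_mem_relint hm u ℓ c hcpos hcℓ
  have hsub : subsetW σ W := hface hrm
  have htoC : ∀ i, toC (u i) = intToC (v i) := by
    intro i; funext j; simp [toC, hu, intToR, intToC]
  have hall : ∀ i, intToC (v i) ∈ W := by
    intro i
    by_cases h : i = ℓ
    · subst h; exact hℓ
    · have hui : u i ∈ σ := by
        refine ⟨fun j => if j = i then 1 else 0, fun j => by positivity, fun j hj => ?_, ?_⟩
        · simp only [Set.notMem_compl_iff, Set.mem_singleton_iff] at hj
          subst hj
          simp [Ne.symm h]
        · simp [ite_smul]
      have := hsub (u i) hui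
      rwa [htoC i] at this
  refine ⟨hall, ?_⟩
  rintro x ⟨d, hd0, rfl⟩
  have : toC (∑ i, d i • u i) = ∑ i, ((d i : ℝ) : ℂ) • intToC (v i) := by
    funext j
    simp only [toC, Finset.sum_apply, Pi.smul_apply, smul_eq_mul, intToC, hu, intToR]
    push_cast
    rfl
  rw [this]
  exact Submodule.sum_mem W fun i _ => W.smul_mem _ (hall i)
end
end

section
/- Fix n ∈ ℕ. Let v₁, …, v_s ∈ ℤⁿ be ℝ-linearly independent, σ := Cone(v₁, …, v_s), and W ⊆ ℂⁿ a complex vector subspace. Suppose there is an ℝ-linear functional m : ℝⁿ → ℝ with m(vᵢ) ≥ 0 for all i and such that vᵢ ∈ W whenever m(vᵢ) > 0. Assume that for every subset J ⊆ {i : m(vᵢ) = 0}, the cone Cone(vⱼ : j ∈ J) satisfies the implication [Relint ∩ W ∩ ℤⁿ ≠ ∅ ⟹ the cone is ⊆ W]. Then σ satisfies the implication [Relint(σ) ∩ W ∩ ℤⁿ ≠ ∅ ⟹ σ ⊆ W]. -/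
open scoped BigOperators

noncomputable section

open scoped Matrix

lemma coeff_unique_s13 {n s : ℕ} (u : Fin s → Fin n → ℝ) (hli : LinearIndependent ℝ u)
    {c d : Fin s → ℝ} (h : ∑ i, c i • u i = ∑ i, d i • u i) : c = d := by
  funext i
  have h0 : ∑ i, (c i - d i) • u i = 0 := by
    simp [sub_smul, Finset.sum_sub_distrib, h]
  have := Fintype.linearIndependent_iff.mp hli (fun i => c i - d i) h0 i
  linarith

lemma exists_rat_coeffs {n s : ℕ} (v : Fin s → Fin n → ℤ)
    (hli : LinearIndependent ℝ fun i => intToR (v i)) (m0 : Fin n → ℤ)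
    (c : Fin s → ℝ) (hc : ∑ i, c i • intToR (v i) = intToR m0) :
    ∃ q : Fin s → ℚ, ∀ i, (q i : ℝ) = c i := by
  classical
  set A : Matrix (Fin n) (Fin s) ℝ := Matrix.of fun k i => (v i k : ℝ) with hA
  set G : Matrix (Fin s) (Fin s) ℝ := Matrix.of fun i j => ∑ k, (v i k : ℝ) * (v j k : ℝ) with hG
  set Gq : Matrix (Fin s) (Fin s) ℚ := Matrix.of fun i j => ∑ k, (v i k : ℚ) * (v j k : ℚ) with hGq
  have hGA : G = Aᵀ * A := by
    ext i j
    simp [Matrix.mul_apply, hA, hG]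
  -- injectivity of G over ℝ
  have hker : ∀ d : Fin s → ℝ, G.mulVec d = 0 → d = 0 := by
    intro d hd
    have h1 : d ⬝ᵥ G.mulVec d = (A.mulVec d) ⬝ᵥ (A.mulVec d) := by
      rw [hGA, ← Matrix.mulVec_mulVec, Matrix.dotProduct_mulVec, Matrix.vecMul_transpose]
    rw [hd, dotProduct_zero] at h1
    have h2 : A.mulVec d = 0 := dotProduct_self_eq_zero.mp h1.symm
    have h3 : ∑ i, d i • intToR (v i) = 0 := by
      funext k
      have := congrFun h2 k
      simpa [Matrix.mulVec, dotProduct, hA, intToR, Finset.sum_apply, mul_comm] using this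
    funext i
    exact Fintype.linearIndependent_iff.mp hli d h3 i
  have hGinj : Function.Injective G.mulVec := by
    intro a b hab
    have : G.mulVec (a - b) = 0 := by
      rw [Matrix.mulVec_sub, hab, sub_self]
    have := hker _ this
    funext i
    have := congrFun this i
    simp only [Pi.sub_apply, Pi.zero_apply, sub_eq_zero] at this
    exact this
  -- cast of Gq mulVec
  have cast_mulVec : ∀ p : Fin s → ℚ, (fun i => ((Gq.mulVec p) i : ℝ)) = G.mulVec (fun j => (p j : ℝ)) := by
    intro p
    funext i
    simp only [Matrix.mulVec, dotProduct, hG, hGq, Matrix.of_apply]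
    push_cast
    ring
  -- injectivity over ℚ, hence surjectivity
  have hq_inj : Function.Injective Gq.mulVecLin := by
    intro a b hab
    have h1 : (fun i => ((Gq.mulVec a) i : ℝ)) = (fun i => ((Gq.mulVec b) i : ℝ)) := by
      simp only [Matrix.mulVecLin_apply] at hab
      rw [hab]
    rw [cast_mulVec, cast_mulVec] at h1
    have := hGinj h1
    funext i
    exact_mod_cast congrFun this i
  have hq_surj : Function.Surjective Gq.mulVecLin :=
    LinearMap.injective_iff_surjective.mp hq_inj
  obtain ⟨q, hq⟩ := hq_surj (fun i => ∑ k, (v i k : ℚ) * (m0 k : ℚ))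
  refine ⟨q, ?_⟩
  -- show G.mulVec c = G.mulVec (coe ∘ q)
  have hck : ∀ k, ∑ j, c j * (v j k : ℝ) = (m0 k : ℝ) := by
    intro k
    have := congrFun hc k
    simpa [Finset.sum_apply, intToR] using this
  have hGc : G.mulVec c = fun i => ∑ k, (v i k : ℝ) * (m0 k : ℝ) := by
    funext i
    simp only [Matrix.mulVec, dotProduct, hG, Matrix.of_apply, Finset.sum_mul]
    rw [Finset.sum_comm]
    refine Finset.sum_congr rfl fun k _ => ?_
    rw [← hck k, Finset.mul_sum]
    exact Finset.sum_congr rfl fun j _ => by ring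
  have hGq2 : G.mulVec (fun j => (q j : ℝ)) = fun i => ∑ k, (v i k : ℝ) * (m0 k : ℝ) := by
    rw [← cast_mulVec]
    funext i
    rw [show Gq.mulVec q = _ from hq]
    push_cast
    rfl
  have := hGinj (hGq2.trans hGc.symm)
  intro i
  exact congrFun this i

lemma pos_of_relint {n s : ℕ} (u : Fin s → Fin n → ℝ) (hli : LinearIndependent ℝ u)
    {c : Fin s → ℝ} (hc : ∀ i, 0 ≤ c i)
    (hx : (∑ i, c i • u i) ∈ intrinsicInterior ℝ (coneOf u)) :
    ∀ i, 0 < c i := by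
  classical
  intro i0
  set x := ∑ i, c i • u i with hxdef
  rcases mem_intrinsicInterior.mp hx with ⟨y, hy, hyx⟩
  rcases Metric.mem_nhds_iff.mp (mem_interior_iff_mem_nhds.mp hy) with ⟨ε, hε, hball⟩
  set t : ℝ := ε / (2 * (‖u i0‖ + 1)) with ht
  have hno : (0:ℝ) < ‖u i0‖ + 1 := by positivity
  have htpos : 0 < t := by positivity
  have h1 : u i0 ∈ coneOf u := by
    refine ⟨fun j => if j = i0 then 1 else 0, fun j => by dsimp only; split <;> norm_num, ?_⟩
    simp [ite_smul]
  have h0c : (0 : Fin n → ℝ) ∈ coneOf u := ⟨0, fun _ => le_refl _, by simp⟩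
  have hxc : x ∈ coneOf u := ⟨c, hc, rfl⟩
  have hmem : x - t • u i0 ∈ affineSpan ℝ (coneOf u) := by
    have := AffineSubspace.smul_vsub_vadd_mem (affineSpan ℝ (coneOf u)) (-t)
      (mem_affineSpan ℝ h1) (mem_affineSpan ℝ h0c) (mem_affineSpan ℝ hxc)
    simpa [vsub_eq_sub, vadd_eq_add, sub_eq_add_neg, neg_smul, add_comm] using this
  set z : affineSpan ℝ (coneOf u) := ⟨x - t • u i0, hmem⟩ with hz
  have hdz : z ∈ Metric.ball y ε := by
    rw [Metric.mem_ball, Subtype.dist_eq, hz, hyx]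
    have : dist (x - t • u i0) x = t * ‖u i0‖ := by
      rw [dist_eq_norm, sub_sub_cancel_left, norm_neg, norm_smul, Real.norm_eq_abs,
        abs_of_pos htpos]
    rw [this]
    have h2 : t * ‖u i0‖ ≤ t * (‖u i0‖ + 1) := by nlinarith [norm_nonneg (u i0)]
    have h3 : t * (‖u i0‖ + 1) = ε / 2 := by
      rw [ht, div_mul_eq_mul_div, div_eq_iff (by positivity)]
      ring
    linarith
  have hzc : x - t • u i0 ∈ coneOf u := hball hdz
  obtain ⟨d, hd0, hdx⟩ := hzc
  have heq : ∑ i, (c i - if i = i0 then t else 0) • u i = ∑ i, d i • u i := by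
    rw [← hdx]
    simp [sub_smul, Finset.sum_sub_distrib, ite_smul, ← hxdef]
  have hkey := congrFun (coeff_unique_s13 u hli heq) i0
  simp at hkey
  have := hd0 i0
  linarith

lemma mem_relint_sub {n s : ℕ} (u : Fin s → Fin n → ℝ) (hli : LinearIndependent ℝ u)
    (K : Set (Fin s)) {c : Fin s → ℝ} (hpos : ∀ i ∈ K, 0 < c i)
    (hzero : ∀ i ∉ K, c i = 0) :
    (∑ i, c i • u i) ∈ intrinsicInterior ℝ (coneOfSub u K) := by
  classical
  set τ := coneOfSub u K with hτ
  -- the parametrizing linear map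
  set Φ : (Fin s → ℝ) →ₗ[ℝ] (Fin n → ℝ) :=
    { toFun := fun d => ∑ i, d i • u i
      map_add' := fun a b => by simp [add_smul, Finset.sum_add_distrib]
      map_smul' := fun r a => by simp [smul_smul, Finset.smul_sum] } with hΦ
  have hΦapp : ∀ d : Fin s → ℝ, Φ d = ∑ i, d i • u i := fun d => rfl
  have hΦinj : Function.Injective Φ := fun a b hab => coeff_unique_s13 u hli hab
  set e := LinearEquiv.ofInjective Φ hΦinj with he
  set ψ := ((e.symm : LinearMap.range Φ ≃ₗ[ℝ] (Fin s → ℝ)) :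
      LinearMap.range Φ →ₗ[ℝ] (Fin s → ℝ)).toContinuousLinearMap with hψ
  set C : ℝ := ‖ψ‖ with hC
  have hC0 : 0 ≤ C := by rw [hC]; exact norm_nonneg ψ
  have hbound : ∀ d : Fin s → ℝ, ‖d‖ ≤ C * ‖Φ d‖ := by
    intro d
    have h1 : ψ ⟨Φ d, LinearMap.mem_range_self Φ d⟩ = d := by
      simp only [hψ, LinearMap.coe_toContinuousLinearMap', LinearEquiv.coe_coe]
      rw [show (⟨Φ d, LinearMap.mem_range_self Φ d⟩ : LinearMap.range Φ) = e d from
        Subtype.ext (LinearEquiv.ofInjective_apply Φ d).symm]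
      exact e.symm_apply_apply d
    calc ‖d‖ = ‖ψ ⟨Φ d, LinearMap.mem_range_self Φ d⟩‖ := by rw [h1]
      _ ≤ C * ‖(⟨Φ d, LinearMap.mem_range_self Φ d⟩ : LinearMap.range Φ)‖ :=
          ψ.le_opNorm _
      _ = C * ‖Φ d‖ := rfl
  -- lower bound δ for c on K
  obtain ⟨δ, hδ0, hδle⟩ : ∃ δ : ℝ, 0 < δ ∧ ∀ i ∈ K, δ ≤ c i := by
    by_cases hK : (K.toFinset).Nonempty
    · obtain ⟨i0, hi0, hmin⟩ := Finset.exists_min_image K.toFinset c hK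
      exact ⟨c i0, hpos i0 (Set.mem_toFinset.mp hi0),
        fun i hi => hmin i (Set.mem_toFinset.mpr hi)⟩
    · exact ⟨1, one_pos, fun i hi => absurd (Set.mem_toFinset.mpr hi)
        (fun h => hK ⟨i, h⟩)⟩
  clear_value C
  set ε : ℝ := δ / (C + 1) with hε
  clear_value ε
  have hεpos : 0 < ε := by rw [hε]; positivity
  -- x ∈ τ
  have hxτ : (∑ i, c i • u i) ∈ τ :=
    ⟨c, fun i => by by_cases h : i ∈ K; exacts [(hpos i h).le, (hzero i h).ge],
      hzero, rfl⟩
  -- the span containing τ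
  set uK : Fin s → (Fin n → ℝ) := fun i => if i ∈ K then u i else 0 with huK
  set L : Submodule ℝ (Fin n → ℝ) := Submodule.span ℝ (Set.range uK) with hL
  have hτL : τ ⊆ (L : Set (Fin n → ℝ)) := by
    rintro w ⟨d, hd0, hdK, rfl⟩
    refine Submodule.sum_mem _ fun i _ => ?_
    by_cases hi : i ∈ K
    · have : u i = uK i := by simp [huK, hi]
      rw [this]
      exact Submodule.smul_mem _ _ (Submodule.subset_span ⟨i, rfl⟩)
    · rw [hdK i hi, zero_smul]
      exact Submodule.zero_mem _
  have hspan : affineSpan ℝ τ ≤ L.toAffineSubspace :=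
    le_trans affineSpan_le_toAffineSubspace_span
      (fun w hw => Submodule.span_le.mpr hτL hw)
  -- membership
  have hxspan : (∑ i, c i • u i) ∈ affineSpan ℝ τ := mem_affineSpan ℝ hxτ
  rw [mem_intrinsicInterior]
  refine ⟨⟨∑ i, c i • u i, hxspan⟩, ?_, rfl⟩
  rw [mem_interior]
  refine ⟨Metric.ball ⟨∑ i, c i • u i, hxspan⟩ ε, ?_, Metric.isOpen_ball,
    Metric.mem_ball_self hεpos⟩
  rintro ⟨zv, hzspan⟩ hzball
  have hzL : zv ∈ L := Submodule.mem_toAffineSubspace.mp (hspan hzspan)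
  rw [hL, Submodule.mem_span_range_iff_exists_fun] at hzL
  obtain ⟨g, hg⟩ := hzL
  set ec : Fin s → ℝ := fun i => if i ∈ K then g i else 0 with hec
  have hze : ∑ i, ec i • u i = zv := by
    rw [← hg]
    refine Finset.sum_congr rfl fun i _ => ?_
    by_cases hi : i ∈ K <;> simp [hec, huK, hi]
  -- distance bound
  have hdist : ‖zv - ∑ i, c i • u i‖ < ε := by
    have := Metric.mem_ball.mp hzball
    rw [Subtype.dist_eq] at this
    simpa [dist_eq_norm] using this
  have hΦec : Φ (ec - c) = zv - ∑ i, c i • u i := by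
    rw [map_sub, hΦapp, hΦapp, hze]
  have hnorm : ‖ec - c‖ < δ := by
    have h1 : ‖ec - c‖ ≤ C * ‖zv - ∑ i, c i • u i‖ := by
      rw [← hΦec]; exact hbound _
    have h2 : C * ‖zv - ∑ i, c i • u i‖ ≤ C * ε :=
      mul_le_mul_of_nonneg_left hdist.le hC0
    have h3 : C * ε < δ := by
      have hc1 : (0:ℝ) < C + 1 := by linarith
      have : C * ε = C * δ / (C + 1) := by rw [hε]; ring
      rw [this, div_lt_iff₀ hc1]
      ring_nf
      linarith only [hδ0]
    linarith only [h1, h2, h3]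
  -- conclude z ∈ τ
  have hcomp : ∀ i, |ec i - c i| < δ := by
    intro i
    calc |ec i - c i| = ‖(ec - c) i‖ := by simp [Real.norm_eq_abs]
      _ ≤ ‖ec - c‖ := norm_le_pi_norm (ec - c) i
      _ < δ := hnorm
  show zv ∈ τ
  refine ⟨ec, fun i => ?_, fun i hi => by simp [hec, hi], hze.symm⟩
  by_cases hi : i ∈ K
  · have h1 := hδle i hi
    have h2 := hcomp i
    have := abs_lt.mp h2
    simp only [hec, if_pos hi] at this ⊢
    linarith [this.1]
  · simp [hec, hi]

/-- F-dlt implies non-dicritical, inductive step: let `σ = Cone(v₁,…,v_s)` be simplicial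
rational, and `f` a linear functional nonnegative on the generators such that `vᵢ ∈ W`
whenever `f(vᵢ) > 0`.  If every subcone generated by generators with `f(vᵢ) = 0`
satisfies the (†) implication for `W`, then so does `σ`. -/
theorem dagger_of_support_function (n s : ℕ) (v : Fin s → Fin n → ℤ)
    (hli : LinearIndependent ℝ fun i => intToR (v i))
    (W : Submodule ℂ (Fin n → ℂ))
    (f : (Fin n → ℝ) →ₗ[ℝ] ℝ)
    (hf0 : ∀ i, 0 ≤ f (intToR (v i)))
    (hfW : ∀ i, 0 < f (intToR (v i)) → intToC (v i) ∈ W)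
    (hJ : ∀ J : Set (Fin s), (∀ i ∈ J, f (intToR (v i)) = 0) →
      relintMeetsLattice (coneOfSub (fun i => intToR (v i)) J) W →
      subsetW (coneOfSub (fun i => intToR (v i)) J) W) :
    relintMeetsLattice (coneOf fun i => intToR (v i)) W →
      subsetW (coneOf fun i => intToR (v i)) W := by
  classical
  rintro ⟨m0, hrel, hm0W⟩
  have hxσ : intToR m0 ∈ coneOf (fun i => intToR (v i)) := intrinsicInterior_subset hrel
  obtain ⟨c, hc0, hcx⟩ := hxσ
  have hcpos : ∀ i, 0 < c i := pos_of_relint _ hli hc0 (by rw [← hcx]; exact hrel)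
  obtain ⟨q, hq⟩ := exists_rat_coeffs v hli m0 c hcx.symm
  set N : ℕ := ∏ i, (q i).den with hN
  have hNpos : 0 < N := Finset.prod_pos (fun i _ => (q i).pos)
  have hden : ∀ i, ∃ z : ℤ, (z : ℝ) = (N : ℝ) * c i := by
    intro i
    obtain ⟨k, hk⟩ := Finset.dvd_prod_of_mem (fun j => (q j).den) (Finset.mem_univ i)
    refine ⟨(q i).num * (k : ℤ), ?_⟩
    have hd0 : ((q i).den : ℚ) ≠ 0 := by exact_mod_cast (q i).den_nz
    have hqq : (((q i).num * (k : ℤ) : ℤ) : ℚ) = (N : ℚ) * q i := by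
      rw [hN, hk]
      push_cast
      rw [mul_comm (((q i).den : ℚ)) ((k : ℚ)), mul_assoc, Rat.den_mul_eq_num]
      ring
    have := congrArg (fun r : ℚ => (r : ℝ)) hqq
    push_cast at this
    rw [hq i] at this
    exact_mod_cast this
  choose z hz using hden
  set J : Set (Fin s) := {i | f (intToR (v i)) = 0} with hJdef
  set m' : Fin n → ℤ := fun t => ∑ i, (if i ∈ J then z i else 0) * v i t with hm'
  set c' : Fin s → ℝ := fun i => if i ∈ J then (N : ℝ) * c i else 0 with hc'
  have h1 : intToR m' = ∑ i, c' i • intToR (v i) := by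
    funext t
    simp only [intToR, hm', Finset.sum_apply, Pi.smul_apply, smul_eq_mul, hc']
    push_cast [apply_ite (fun r : ℤ => (r : ℝ))]
    refine Finset.sum_congr rfl fun i _ => ?_
    by_cases hi : i ∈ J <;> simp [hi, hz i]
  have hpos' : ∀ i ∈ J, 0 < c' i := fun i hi => by
    simp only [hc', if_pos hi]
    have hN0 : (0:ℝ) < N := by exact_mod_cast hNpos
    exact mul_pos hN0 (hcpos i)
  have hzero' : ∀ i ∉ J, c' i = 0 := fun i hi => by simp [hc', hi]
  have h2 : intToR m' ∈ intrinsicInterior ℝ (coneOfSub (fun i => intToR (v i)) J) := by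
    rw [h1]; exact mem_relint_sub _ hli J hpos' hzero'
  have hcomplex : ∀ t, (m0 t : ℂ) = ∑ i, (c i : ℂ) * (v i t : ℂ) := by
    intro t
    have hr : (m0 t : ℝ) = ∑ i, c i * (v i t : ℝ) := by
      have := congrFun hcx t
      simpa [intToR, Finset.sum_apply] using this
    have := congrArg (fun r : ℝ => (r : ℂ)) hr
    push_cast at this
    exact this
  have h3 : intToC m' = (N : ℂ) • intToC m0 -
      ∑ i, (if i ∈ J then (0 : ℂ) else ((N : ℝ) * c i : ℂ)) • intToC (v i) := by
    funext t
    simp only [intToC, hm', Pi.smul_apply, Pi.sub_apply, Finset.sum_apply, smul_eq_mul]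
    push_cast [apply_ite (fun r : ℤ => (r : ℂ))]
    rw [hcomplex t, Finset.mul_sum, ← Finset.sum_sub_distrib]
    refine Finset.sum_congr rfl fun i _ => ?_
    by_cases hi : i ∈ J
    · have hzc : ((z i : ℝ) : ℂ) = ((N : ℝ) * c i : ℂ) := by rw [hz i]; push_cast; ring
      push_cast at hzc
      simp only [if_pos hi, hzc]
      push_cast
      ring
    · simp only [if_neg hi]
      push_cast
      ring
  have h4 : intToC m' ∈ W := by
    rw [h3]
    refine sub_mem (W.smul_mem _ hm0W) (Submodule.sum_mem _ fun i _ => ?_)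
    by_cases hi : i ∈ J
    · rw [if_pos hi, zero_smul]; exact W.zero_mem
    · have hfpos : 0 < f (intToR (v i)) :=
        lt_of_le_of_ne (hf0 i) (fun h => hi (Set.mem_setOf.mpr h.symm))
      rw [if_neg hi]
      exact W.smul_mem _ (hfW i hfpos)
  have h5 := hJ J (fun i hi => hi) ⟨m', h2, h4⟩
  have hgen : ∀ i, intToC (v i) ∈ W := by
    intro i
    have htoC : toC (intToR (v i)) = intToC (v i) :=
      funext fun t => by simp [toC, intToR, intToC]
    by_cases hi : i ∈ J
    · have hmem : intToR (v i) ∈ coneOfSub (fun j => intToR (v j)) J := by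
        refine ⟨fun j => if j = i then 1 else 0,
          fun j => by dsimp only; split <;> norm_num,
          fun j hj => by dsimp only; rw [if_neg (fun h => hj (by rw [h]; exact hi))],
          by simp [ite_smul]⟩
      have := h5 _ hmem
      rwa [htoC] at this
    · exact hfW i (lt_of_le_of_ne (hf0 i) (fun h => hi (Set.mem_setOf.mpr h.symm)))
  rintro x ⟨d, hd0, rfl⟩
  have hts : toC (∑ i, d i • intToR (v i)) = ∑ i, (d i : ℂ) • intToC (v i) := by
    funext t
    simp only [toC, intToR, intToC, Finset.sum_apply, Pi.smul_apply, smul_eq_mul]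
    push_cast
    rfl
  rw [hts]
  exact Submodule.sum_mem _ fun i _ => Submodule.smul_mem _ _ (hgen i)
end
end

section
/- Fix n ∈ ℕ. Let u₁, …, u_s ∈ ℤⁿ be ℝ-linearly independent, τ := Cone(u₁, …, u_s), and W ⊆ ℂⁿ a complex vector subspace such that Relint(τ) ∩ W ∩ ℤⁿ ≠ ∅ and τ ⊄ W. Then dim_ℂ (W ∩ span_ℂ(u₁, …, u_s)) ≥ #{i : uᵢ ∈ W} + 1. In particular, W ∩ span_ℂ(u₁, …, u_s) is not equal to span_ℂ{uᵢ : i ∈ S} for any subset S ⊆ {1, …, s}. -/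
open scoped BigOperators

noncomputable section

lemma toC_sum_smul {n k : ℕ} (v : Fin k → Fin n → ℝ) (d : Fin k → ℝ) :
    toC (∑ i, d i • v i) = ∑ i, (d i : ℂ) • toC (v i) := by
  funext j
  simp [toC, Finset.sum_apply, Pi.smul_apply, Complex.ofReal_sum]

lemma intToC_eq_toC {n : ℕ} (m : Fin n → ℤ) : intToC m = toC (intToR m) := by
  funext j; simp [intToC, toC, intToR]

lemma linIndep_toC {n : ℕ} {ι : Type*} [Fintype ι] (v : ι → Fin n → ℝ)
    (h : LinearIndependent ℝ v) : LinearIndependent ℂ (fun i => toC (v i)) := by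
  rw [Fintype.linearIndependent_iff] at h ⊢
  intro g hg i
  have hcomp : ∀ j : Fin n, ∑ i, g i * (v i j : ℂ) = 0 := by
    intro j
    have := congrFun hg j
    simpa [toC, Finset.sum_apply, Pi.smul_apply] using this
  have hre : ∀ i, (g i).re = 0 := by
    apply h
    funext j
    have := congrArg Complex.re (hcomp j)
    simpa [Complex.re_sum, Complex.mul_re, Finset.sum_apply, Pi.smul_apply] using this
  have him : ∀ i, (g i).im = 0 := by
    apply h
    funext j
    have := congrArg Complex.im (hcomp j)
    simpa [Complex.im_sum, Complex.mul_im, Finset.sum_apply, Pi.smul_apply] using this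
  exact Complex.ext (hre i) (him i)

lemma relint_pos_coeff {n k : ℕ} (v : Fin k → (Fin n → ℝ))
    (hli : LinearIndependent ℝ v) {x : Fin n → ℝ}
    (hx : x ∈ intrinsicInterior ℝ (coneOf v)) :
    ∃ c : Fin k → ℝ, (∀ i, 0 < c i) ∧ x = ∑ i, c i • v i := by
  set σ := coneOf v with hσ
  have hxσ : x ∈ σ := intrinsicInterior_subset hx
  obtain ⟨c, hc0, hcx⟩ := id hxσ
  have h0σ : (0 : Fin n → ℝ) ∈ σ := ⟨0, fun i => le_refl 0, by simp⟩
  have hviσ : ∀ i, v i ∈ σ := by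
    intro i
    refine ⟨fun j => if j = i then 1 else 0, fun j => by positivity, ?_⟩
    simp [Finset.sum_ite_eq']
  obtain ⟨y, hy_int, hy_eq⟩ := hx
  have huniq : ∀ c d : Fin k → ℝ, ∑ i, c i • v i = ∑ i, d i • v i → c = d := by
    intro c d hcd
    have h0 : ∑ i, (c i - d i) • v i = 0 := by
      simp [sub_smul, Finset.sum_sub_distrib, hcd]
    have := Fintype.linearIndependent_iff.mp hli _ h0
    funext i; have := this i; linarith
  suffices H : ∀ i, 0 < c i by exact ⟨c, H, hcx⟩
  intro i
  have hmem : ∀ t : ℝ, x - t • v i ∈ affineSpan ℝ σ := by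
    intro t
    have hdir : v i - 0 ∈ (affineSpan ℝ σ).direction :=
      AffineSubspace.vsub_mem_direction (subset_affineSpan ℝ σ (hviσ i))
        (subset_affineSpan ℝ σ h0σ)
    have hdir0 : v i ∈ (affineSpan ℝ σ).direction := by simpa using hdir
    have hdir' : (-t) • v i ∈ (affineSpan ℝ σ).direction :=
      Submodule.smul_mem _ (-t) hdir0
    have := AffineSubspace.vadd_mem_of_mem_direction hdir' (subset_affineSpan ℝ σ hxσ)
    convert this using 1
    funext j
    simp [Pi.vadd_apply]
    ring
  set g : ℝ → affineSpan ℝ σ := fun t => ⟨x - t • v i, hmem t⟩ with hg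
  have hgc : Continuous g := by
    apply Continuous.subtype_mk
    fun_prop
  have hg0 : g 0 = y := by
    apply Subtype.ext
    simp [hg, hy_eq]
  have hnhds : (Subtype.val ⁻¹' σ : Set (affineSpan ℝ σ)) ∈ nhds y :=
    mem_interior_iff_mem_nhds.mp hy_int
  have hev : ∀ᶠ t in nhds (0 : ℝ), x - t • v i ∈ σ := by
    have := hgc.continuousAt (x := (0:ℝ)) (hg0 ▸ hnhds)
    exact this
  have hev' : ∀ᶠ t in nhdsWithin (0:ℝ) (Set.Ioi 0), x - t • v i ∈ σ :=
    hev.filter_mono nhdsWithin_le_nhds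
  obtain ⟨t, htσ, ht0⟩ := (hev'.and (eventually_mem_nhdsWithin)).exists
  obtain ⟨d, hd0, hdx⟩ := htσ
  have : d = fun j => c j - (if j = i then t else 0) := by
    apply huniq
    rw [← hdx, hcx]
    rw [show (∑ j, ((fun j => c j - (if j = i then t else 0)) j) • v j)
        = ∑ j, (c j • v j - (if j = i then t else 0) • v j) by
      simp [sub_smul]]
    rw [Finset.sum_sub_distrib]
    simp [ite_smul, Finset.sum_ite_eq']
  have hdi := hd0 i
  rw [this] at hdi
  simp at hdi
  have : (0:ℝ) < t := ht0
  linarith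


set_option maxHeartbeats 1000000 in
set_option synthInstance.maxHeartbeats 400000 in
/-- For a dicritical simplicial rational cone `τ = Cone(u₁,…,u_s)` (i.e. `Relint(τ)`
contains a lattice point of `W` but `τ ⊄ W`),
`dim_ℂ (W ∩ span_ℂ(u₁,…,u_s)) ≥ #{i : uᵢ ∈ W} + 1`; in particular `W ∩ span_ℂ(u)` is
not the span of any subset of the generators. -/
theorem dim_inter_ge_of_dicritical (n s : ℕ) (u : Fin s → Fin n → ℤ)
    (hli : LinearIndependent ℝ fun i => intToR (u i))
    (W : Submodule ℂ (Fin n → ℂ))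
    (hmeet : relintMeetsLattice (coneOf fun i => intToR (u i)) W)
    (hns : ¬ subsetW (coneOf fun i => intToR (u i)) W) :
    Nat.card {i : Fin s // intToC (u i) ∈ W} + 1 ≤
      Module.finrank ℂ
        (W ⊓ Submodule.span ℂ (Set.range fun i => intToC (u i)) :
          Submodule ℂ (Fin n → ℂ)) ∧
    ∀ S : Set (Fin s),
      W ⊓ Submodule.span ℂ (Set.range fun i => intToC (u i)) ≠
        Submodule.span ℂ ((fun i => intToC (u i)) '' S) := by
  classical
  set uC : Fin s → Fin n → ℂ := fun i => intToC (u i) with huC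
  have huCtoC : uC = fun i => toC (intToR (u i)) := by
    funext i; exact intToC_eq_toC (u i)
  have hliC : LinearIndependent ℂ uC := by
    rw [huCtoC]; exact linIndep_toC _ hli
  obtain ⟨m, hmint, hmW⟩ := hmeet
  obtain ⟨c, hcpos, hcx⟩ := relint_pos_coeff _ hli hmint
  -- a generator not in W
  have hi0 : ∃ i₀, uC i₀ ∉ W := by
    by_contra h
    push_neg at h
    apply hns
    intro x hx
    obtain ⟨d, hd0, hdx⟩ := hx
    rw [hdx, toC_sum_smul]
    exact Submodule.sum_mem _ fun i _ => Submodule.smul_mem _ _ (h i)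
  obtain ⟨i₀, hi₀⟩ := hi0
  set Tset : Set (Fin s) := {i | uC i ∈ W} with hTset
  set Q : Submodule ℂ (Fin n → ℂ) :=
    W ⊓ Submodule.span ℂ (Set.range uC) with hQ
  set P : Submodule ℂ (Fin n → ℂ) := Submodule.span ℂ (uC '' Tset) with hP
  have hPQ : P ≤ Q := by
    rw [hP, hQ, Submodule.span_le]
    rintro y ⟨i, hiT, rfl⟩
    exact ⟨hiT, Submodule.subset_span ⟨i, rfl⟩⟩
  have hmC : intToC m = ∑ i, (c i : ℂ) • uC i := by
    rw [intToC_eq_toC, hcx, toC_sum_smul, huCtoC]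
  have hmQ : intToC m ∈ Q := by
    refine ⟨hmW, ?_⟩
    rw [hmC]
    exact Submodule.sum_mem _ fun i _ => Submodule.smul_mem _ _
      (Submodule.subset_span ⟨i, rfl⟩)
  have hmP : intToC m ∉ P := by
    intro hmem
    rw [hP, Finsupp.mem_span_image_iff_linearCombination] at hmem
    obtain ⟨l, hl, hlm⟩ := hmem
    rw [Finsupp.linearCombination_apply, Finsupp.sum_fintype _ _ (by simp)] at hlm
    have hrel : ∑ i, (l i - (c i : ℂ)) • uC i = 0 := by
      rw [show (∑ i, (l i - (c i : ℂ)) • uC i)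
          = ∑ i, l i • uC i - ∑ i, (c i : ℂ) • uC i by
        simp [sub_smul, Finset.sum_sub_distrib]]
      rw [hlm]
      exact sub_eq_zero.mpr hmC
    have hkey := Fintype.linearIndependent_iff.mp hliC _ hrel i₀
    have hl0 : l i₀ = 0 := (Finsupp.mem_supported' ℂ l).mp hl i₀ (fun h => hi₀ h)
    rw [hl0, zero_sub, neg_eq_zero, Complex.ofReal_eq_zero] at hkey
    exact (hcpos i₀).ne' hkey
  have hPltQ : P < Q := lt_of_le_of_ne hPQ (fun h => hmP (h ▸ hmQ))
  have hfin : Module.finrank ℂ P < Module.finrank ℂ Q :=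
    Submodule.finrank_lt_finrank_of_lt hPltQ
  have hcard : Module.finrank ℂ P = Nat.card {i : Fin s // uC i ∈ W} := by
    have himg : uC '' Tset = Set.range (fun i : Tset => uC i.1) :=
      Set.image_eq_range _ _
    have hind : LinearIndependent ℂ (fun i : Tset => uC i.1) :=
      hliC.comp _ Subtype.val_injective
    rw [hP, himg, finrank_span_eq_card hind, Nat.card_eq_fintype_card]
    exact Fintype.card_congr (Equiv.refl _)
  constructor
  · have hgoal : Nat.card {i : Fin s // uC i ∈ W} + 1 ≤ Module.finrank ℂ Q := by omega
    exact hgoal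
  · intro S heq
    have hSsub : S ⊆ Tset := by
      intro i hiS
      have : uC i ∈ Q := heq ▸ Submodule.subset_span (Set.mem_image_of_mem _ hiS)
      exact this.1
    haveI : Finite ↥(uC '' S) := (S.toFinite.image _).to_subtype
    haveI : Fintype ↥(uC '' S) := Fintype.ofFinite _
    have h1 : Module.finrank ℂ Q ≤ (uC '' S).toFinset.card := by
      rw [heq]; exact finrank_span_le_card _
    have h2 : (uC '' S).toFinset.card = (uC '' S).ncard := by
      rw [Set.ncard_eq_toFinset_card']
    have h3 : (uC '' S).ncard ≤ S.ncard := Set.ncard_image_le S.toFinite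
    have h4 : S.ncard ≤ Tset.ncard := Set.ncard_le_ncard hSsub Tset.toFinite
    have h5 : Tset.ncard = Nat.card {i : Fin s // uC i ∈ W} := by
      rw [← Nat.card_coe_set_eq]
      rfl
    have := hcard ▸ hfin
    omega
end
end
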